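/- arXiv:1507.03051 — 7 statements merged into one kernel-verified Lean document; each statement's English description precedes it below -/
import Mathlib

section
/- (Happel-Ringel) Let Λ be a finite dimensional hereditary algebra and T_1, T_2 indecomposable Λ-modules with Ext^1_Λ(T_1, T_2) = 0. Then every nonzero homomorphism T_2 → T_1 is either a monomorphism or an epimorphism. -/
/-- `Ext¹_Λ(A, B) = 0`, encoded as: every short exact sequence
`0 → B → E → A → 0` of `Λ`-modules splits. -/
def ExtOneVanish (Λ : Type) [Ring Λ] (A : Type) [AddCommGroup A] [Module Λ A]
    (B : Type) [AddCommGroup B] [Module Λ B] : Prop :=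
  ∀ (E : Type) (_ : AddCommGroup E) (_ : Module Λ E)
    (i : B →ₗ[Λ] E) (p : E →ₗ[Λ] A),
    Function.Injective i → Function.Surjective p →
    LinearMap.range i = LinearMap.ker p →
    ∃ s : A →ₗ[Λ] E, p.comp s = LinearMap.id

def IsIndecomposableModule (Λ : Type) [Ring Λ] (A : Type) [AddCommGroup A]
    [Module Λ A] : Prop :=
  Nontrivial A ∧ ∀ (N N' : Submodule Λ A), IsCompl N N' → N = ⊥ ∨ N' = ⊥

/-!
Let `I` be the image of `f`. Since `Λ` is hereditary, the preimage `R ⊆ Λⁿ` of `I` under a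
presentation `π : Λⁿ ↠ T₁` is projective, so `π|_R` lifts through `T₂ ↠ I` to `g : R → T₂`. The
pushout `M` of `R ↪ Λⁿ` along `g`, with `j : T₂ ↪ M` and `φ : M → T₁` extending `f`, yields an
exact sequence `0 → T₂ → I × M → T₁ → 0`, which splits because `Ext¹(T₁, T₂) = 0`. By Fitting's
lemma the endomorphism rings of `T₁` and `T₂` are local. If `f` is not surjective, `T₁` cannot be a
summand through `I`, so `φ` has a section `σ`; if moreover `f` is not injective, the same argument
on the `T₂` side shows that `j - σ ∘ f` embeds `T₂` into `ker φ`. Counting lengths then forces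
`I = 0`.
-/

namespace IsIndecomposableModule

variable {Λ T : Type} [Ring Λ] [AddCommGroup T] [Module Λ T] [IsNoetherian Λ T] [IsArtinian Λ T]

theorem isUnit_or_isNilpotent (hT : IsIndecomposableModule Λ T) (g : Module.End Λ T) :
    IsUnit g ∨ IsNilpotent g := by
  obtain ⟨n, hn⟩ := Filter.eventually_atTop.mp g.eventually_isCompl_ker_pow_range_pow
  have hcompl := hn (n + 1) n.le_succ
  rcases hT.2 _ _ hcompl with hker | hrange
  · left
    rw [← isUnit_pow_iff n.succ_ne_zero, Module.End.isUnit_iff]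
    refine ⟨LinearMap.ker_eq_bot.mp hker, LinearMap.range_eq_top.mp ?_⟩
    simpa [hker] using hcompl.sup_eq_top
  · exact .inr ⟨n + 1, LinearMap.range_eq_bot.mp hrange⟩

theorem isUnit_of_add_eq_one (hT : IsIndecomposableModule Λ T) {a b : Module.End Λ T}
    (hab : a + b = 1) (ha : ¬IsUnit a) : IsUnit b := by
  rw [eq_sub_of_add_eq' hab]
  exact ((hT.isUnit_or_isNilpotent a).resolve_left ha).isUnit_one_sub

theorem isUnit_of_comp_add_eq_one_of_not_surjective (hT : IsIndecomposableModule Λ T)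
    {X : Type*} [AddCommGroup X] [Module Λ X] {u : X →ₗ[Λ] T} {v : T →ₗ[Λ] X}
    {b : Module.End Λ T} (h : u ∘ₗ v + b = 1) (hu : ¬Function.Surjective u) : IsUnit b :=
  hT.isUnit_of_add_eq_one h fun hunit ↦
    hu (Function.Surjective.of_comp ((Module.End.isUnit_iff _).mp hunit).2)

theorem isUnit_of_comp_add_eq_one_of_not_injective (hT : IsIndecomposableModule Λ T)
    {X : Type*} [AddCommGroup X] [Module Λ X] {u : T →ₗ[Λ] X} {v : X →ₗ[Λ] T}
    {b : Module.End Λ T} (h : v ∘ₗ u + b = 1) (hu : ¬Function.Injective u) : IsUnit b :=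
  hT.isUnit_of_add_eq_one h fun hunit ↦
    hu (Function.Injective.of_comp ((Module.End.isUnit_iff _).mp hunit).1)

theorem exists_comp_eq_id_of_coprod_comp_eq_id (hT : IsIndecomposableModule Λ T)
    {X Y : Type*} [AddCommGroup X] [Module Λ X] [AddCommGroup Y] [Module Λ Y]
    {u : X →ₗ[Λ] T} (hu : ¬Function.Surjective u) {φ : Y →ₗ[Λ] T} {s : T →ₗ[Λ] X × Y}
    (hs : u.coprod φ ∘ₗ s = LinearMap.id) : ∃ σ : T →ₗ[Λ] Y, φ ∘ₗ σ = LinearMap.id := by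
  have hsum : u ∘ₗ (LinearMap.fst Λ X Y ∘ₗ s) + φ ∘ₗ (LinearMap.snd Λ X Y ∘ₗ s) = 1 := by
    rw [Module.End.one_eq_id, ← hs]
    ext
    simp
  obtain ⟨c, hc⟩ := (hT.isUnit_of_comp_add_eq_one_of_not_surjective hsum hu).exists_right_inv
  exact ⟨(LinearMap.snd Λ X Y ∘ₗ s) ∘ₗ c, hc⟩

theorem injective_sub_comp_of_comp_prod_eq_id (hT : IsIndecomposableModule Λ T)
    {X M : Type*} [AddCommGroup X] [Module Λ X] [AddCommGroup M] [Module Λ M]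
    {u : T →ₗ[Λ] X} (hu : ¬Function.Injective u) (j : T →ₗ[Λ] M) (σ : X →ₗ[Λ] M)
    {r : X × M →ₗ[Λ] T} (hr : r ∘ₗ u.prod (-j) = LinearMap.id) :
    Function.Injective (j - σ ∘ₗ u) := by
  set r₁ := r ∘ₗ LinearMap.inl Λ X M
  set r₂ := r ∘ₗ LinearMap.inr Λ X M
  have hsum : (r₁ - r₂ ∘ₗ σ) ∘ₗ u + (-r₂) ∘ₗ (j - σ ∘ₗ u) = 1 := by
    -- this is `r ∘ (u, -j) = id` after writing `j = σ ∘ u + (j - σ ∘ u)`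
    rw [Module.End.one_eq_id, ← hr]
    ext x
    have hx : r (u x, -j x) = r₁ (u x) + r₂ (-j x) := by simp [r₁, r₂, ← map_add]
    simp only [LinearMap.add_apply, LinearMap.comp_apply, LinearMap.sub_apply,
      LinearMap.neg_apply, LinearMap.prod_apply, Function.prod, map_sub, map_neg, hx]
    abel
  have hunit := hT.isUnit_of_comp_add_eq_one_of_not_injective hsum hu
  have hinj := ((Module.End.isUnit_iff _).mp hunit).1
  rw [LinearMap.coe_comp] at hinj
  exact hinj.of_comp

end IsIndecomposableModule

theorem LinearMap.injective_coprod_of_comp_eq_zero {Λ A B M : Type*} [Ring Λ] [AddCommGroup A]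
    [Module Λ A] [AddCommGroup B] [Module Λ B] [AddCommGroup M] [Module Λ M]
    {q : A →ₗ[Λ] M} {σ : B →ₗ[Λ] M} {φ : M →ₗ[Λ] B} (hq : Function.Injective q)
    (hφq : φ ∘ₗ q = 0) (hφσ : φ ∘ₗ σ = LinearMap.id) : Function.Injective (q.coprod σ) := by
  refine (injective_iff_map_eq_zero _).mpr fun ⟨a, b⟩ h ↦ ?_
  have hb : b = 0 := by
    have hqa : φ (q a) = 0 := by simpa using LinearMap.congr_fun hφq a
    have hσb : φ (σ b) = b := by simpa using LinearMap.congr_fun hφσ b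
    simpa [hqa, hσb] using congrArg φ h
  subst hb
  simpa [hq.eq_iff' q.map_zero] using h

/-- The last coordinate maps `Z` onto an ideal, which is projective, so `Z` is the product of that
ideal with the kernel, and the kernel embeds into `Λⁿ⁻¹`. -/
theorem Module.projective_of_injective_pi {Λ : Type*} [Ring Λ]
    (hhered : ∀ I : Submodule Λ Λ, Module.Projective Λ I) {n : ℕ} {Z : Type*}
    [AddCommGroup Z] [Module Λ Z] (ι : Z →ₗ[Λ] Fin n → Λ) (hι : Function.Injective ι) :
    Module.Projective Λ Z := by
  induction n generalizing Z with
  | zero =>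
    have : Subsingleton Z := hι.subsingleton
    infer_instance
  | succ n ih =>
    set e := LinearMap.proj (Fin.last n) ∘ₗ ι
    have := hhered (LinearMap.range e)
    obtain ⟨s, hs⟩ := Module.projective_lifting_property e.rangeRestrict LinearMap.id
      e.surjective_rangeRestrict
    have : Module.Projective Λ (LinearMap.ker e.rangeRestrict) := by
      refine ih ((LinearMap.pi fun i ↦ LinearMap.proj i.castSucc) ∘ₗ ι ∘ₗ Submodule.subtype _) ?_
      intro z w hzw
      have hlast (x : LinearMap.ker e.rangeRestrict) : ι x (Fin.last n) = 0 := by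
        simpa [LinearMap.ker_rangeRestrict, e] using x.2
      refine Subtype.ext (hι (funext (Fin.lastCases ?_ fun i ↦ congrFun hzw i)))
      rw [hlast, hlast]
    exact .of_equiv ((LinearMap.exact_subtype_ker_map _).splitSurjectiveEquiv
      (Submodule.injective_subtype _) ⟨s, hs⟩).1.symm

namespace Submodule

variable {Λ P T N : Type*} [Ring Λ] [AddCommGroup P] [Module Λ P] [AddCommGroup T] [Module Λ T]
  [AddCommGroup N] [Module Λ N] (R : Submodule Λ P) (g : R →ₗ[Λ] T)

abbrev Pushout : Type _ := (P × T) ⧸ LinearMap.range (R.subtype.prod (-g))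

namespace Pushout

def inr : T →ₗ[Λ] R.Pushout g := mkQ _ ∘ₗ LinearMap.inr Λ P T

theorem inr_injective : Function.Injective (inr R g) := by
  refine (injective_iff_map_eq_zero _).mpr fun x hx ↦ ?_
  obtain ⟨r, hr⟩ := (Quotient.mk_eq_zero _).mp hx
  have hr0 : r = 0 := Subtype.ext (congrArg Prod.fst hr)
  simpa [hr0] using (congrArg Prod.snd hr).symm

theorem mk_inl (r : R) : (Quotient.mk ((r : P), (0 : T)) : R.Pushout g) = inr R g (g r) := by
  rw [inr, LinearMap.comp_apply, ← sub_eq_zero, mkQ_apply, ← Quotient.mk_sub, Quotient.mk_eq_zero]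
  exact ⟨r, by simp⟩

theorem injective_prod_neg_inr {M : Type*} [AddCommGroup M] [Module Λ M] (u : T →ₗ[Λ] M) :
    Function.Injective (u.prod (-inr R g)) :=
  fun _ _ h ↦ inr_injective R g (neg_inj.mp (congrArg Prod.snd h))

variable {g} (π : P →ₗ[Λ] N) (f : T →ₗ[Λ] N)

def desc (hg : f ∘ₗ g = π ∘ₗ R.subtype) : R.Pushout g →ₗ[Λ] N :=
  liftQ _ (π.coprod f) <| LinearMap.range_le_ker_iff.mpr <| by
    ext r
    simpa [← sub_eq_add_neg, sub_eq_zero] using (LinearMap.congr_fun hg r).symm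

variable (hg : f ∘ₗ g = π ∘ₗ R.subtype)

@[simp]
theorem desc_mk (w : P) (x : T) :
    desc R π f hg (Quotient.mk (w, x)) = π w + f x := rfl

@[simp]
theorem desc_inr (x : T) : desc R π f hg (inr R g x) = f x :=
  (desc_mk R π f hg 0 x).trans (by simp)

theorem desc_comp_inr : desc R π f hg ∘ₗ inr R g = f :=
  LinearMap.ext (desc_inr R π f hg)

theorem surjective_coprod_desc {M : Type*} [AddCommGroup M] [Module Λ M] (u : M →ₗ[Λ] N)
    (hπ : Function.Surjective π) : Function.Surjective (u.coprod (desc R π f hg)) := by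
  intro t
  obtain ⟨w, rfl⟩ := hπ t
  exact ⟨(0, Quotient.mk (w, 0)), by simp⟩

theorem exact_rangeRestrict_prod_coprod_desc (hR : (LinearMap.range f).comap π ≤ R) :
    Function.Exact (f.rangeRestrict.prod (-inr R g))
      ((LinearMap.range f).subtype.coprod (desc R π f hg)) := by
  refine fun y ↦ ⟨fun h ↦ ?_, by rintro ⟨y, rfl⟩; simp⟩
  obtain ⟨⟨_, z, rfl⟩, m⟩ := y
  obtain ⟨⟨w, x⟩, rfl⟩ := Quotient.mk_surjective _ m
  simp only [LinearMap.coprod_apply, subtype_apply, desc_mk] at h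
  have hw : π w = f (-(z + x)) := by
    rw [map_neg, map_add, eq_neg_iff_add_eq_zero, ← h]
    abel
  set r : R := ⟨w, hR ⟨_, hw.symm⟩⟩
  have hgr : f (g r) = π w := LinearMap.congr_fun hg r
  refine ⟨-(g r + x), Prod.ext (Subtype.ext ?_) ?_⟩
  · change f (-(g r + x)) = f z
    rw [map_neg, map_add, hgr, eq_comm, eq_neg_iff_add_eq_zero, h]
  · change -inr R g (-(g r + x)) = mkQ _ (w, x)
    rw [map_neg, neg_neg, map_add, ← mk_inl]
    simp [inr, r, ← Quotient.mk_add]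

end Pushout

end Submodule

open LinearMap in
theorem eq_zero_of_rangeRestrict_prod_splits {Λ T₁ T₂ M : Type} [Ring Λ]
    [AddCommGroup T₁] [Module Λ T₁] [IsNoetherian Λ T₁] [IsArtinian Λ T₁]
    [AddCommGroup T₂] [Module Λ T₂] [IsNoetherian Λ T₂] [IsArtinian Λ T₂]
    [AddCommGroup M] [Module Λ M]
    (h₁ : IsIndecomposableModule Λ T₁) (h₂ : IsIndecomposableModule Λ T₂)
    {f : T₂ →ₗ[Λ] T₁} (hinj : ¬Function.Injective f) (hsurj : ¬Function.Surjective f)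
    {j : T₂ →ₗ[Λ] M} {φ : M →ₗ[Λ] T₁} (hφj : φ ∘ₗ j = f)
    (hexact : Function.Exact (f.rangeRestrict.prod (-j)) ((range f).subtype.coprod φ))
    (hα : Function.Injective (f.rangeRestrict.prod (-j)))
    {s : T₁ →ₗ[Λ] range f × M} (hs : (range f).subtype.coprod φ ∘ₗ s = LinearMap.id) :
    f = 0 := by
  have hι : ¬Function.Surjective (range f).subtype := fun h ↦ hsurj fun t ↦ by
    obtain ⟨⟨_, x, rfl⟩, rfl⟩ := h t
    exact ⟨x, rfl⟩
  obtain ⟨σ, hσ⟩ := h₁.exists_comp_eq_id_of_coprod_comp_eq_id hι hs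
  obtain ⟨e, he, -⟩ := hexact.splitSurjectiveEquiv hα ⟨s, hs⟩
  have hr : (fst Λ _ _ ∘ₗ e.toLinearMap) ∘ₗ f.rangeRestrict.prod (-j) = LinearMap.id := by
    rw [he]
    ext
    simp
  have hq := h₂.injective_sub_comp_of_comp_prod_eq_id (f.injective_rangeRestrict_iff.not.mpr hinj)
    j (σ ∘ₗ (range f).subtype) hr
  have hφq : φ ∘ₗ (j - (σ ∘ₗ (range f).subtype) ∘ₗ f.rangeRestrict) = 0 := by
    rw [comp_sub, hφj, ← comp_assoc, ← comp_assoc, hσ, id_comp, subtype_comp_codRestrict, sub_self]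
  have hle := Module.length_le_of_injective _ (injective_coprod_of_comp_eq_zero hq hφq hσ)
  have heq := e.length_eq
  simp only [Module.length_prod] at hle heq
  have hfin : Module.length Λ T₂ + Module.length Λ T₁ ≠ ⊤ := by
    simp [Module.length_ne_top]
  have hM : Module.length Λ M ≠ ⊤ := ne_top_of_le_ne_top hfin (heq ▸ le_add_self)
  have hzero : Module.length Λ (range f) = 0 :=
    nonpos_iff_eq_zero.mp <| (ENat.add_le_add_iff_right hM).mp (by rwa [heq, zero_add])
  have := Module.length_eq_zero_iff.mp hzero
  exact range_eq_bot.mp Submodule.eq_bot_of_subsingleton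

theorem happel_ringel_general
    (K : Type) [Field K] (Λ : Type) [Ring Λ] [Algebra K Λ]
    -- Λ is hereditary: every (right) ideal is projective
    (hhered : ∀ I : Submodule Λ Λ, Module.Projective Λ I)
    (T₁ T₂ : Type) [AddCommGroup T₁] [Module Λ T₁] [AddCommGroup T₂] [Module Λ T₂]
    [Module K T₁] [IsScalarTower K Λ T₁] [FiniteDimensional K T₁]
    [Module K T₂] [IsScalarTower K Λ T₂] [FiniteDimensional K T₂]
    (h₁ : IsIndecomposableModule Λ T₁) (h₂ : IsIndecomposableModule Λ T₂)
    (hext : ExtOneVanish Λ T₁ T₂)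
    (f : T₂ →ₗ[Λ] T₁) (hf : f ≠ 0) :
    Function.Injective f ∨ Function.Surjective f := by
  by_contra! hneither
  have : IsNoetherian Λ T₁ := isNoetherian_of_tower K inferInstance
  have : IsArtinian Λ T₁ := isArtinian_of_tower K inferInstance
  have : IsNoetherian Λ T₂ := isNoetherian_of_tower K inferInstance
  have : IsArtinian Λ T₂ := isArtinian_of_tower K inferInstance
  have : Module.Finite Λ T₁ := Module.Finite.of_restrictScalars_finite K Λ T₁
  obtain ⟨n, π, hπ⟩ := Module.Finite.exists_fin' Λ T₁
  set R := (LinearMap.range f).comap π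
  have := Module.projective_of_injective_pi hhered R.subtype R.injective_subtype
  obtain ⟨g, hg⟩ := Module.projective_lifting_property f.rangeRestrict
    ((π ∘ₗ R.subtype).codRestrict _ fun r ↦ r.2) f.surjective_rangeRestrict
  replace hg : f ∘ₗ g = π ∘ₗ R.subtype := congrArg ((LinearMap.range f).subtype ∘ₗ ·) hg
  have hexact := Submodule.Pushout.exact_rangeRestrict_prod_coprod_desc R π f hg le_rfl
  have hα := Submodule.Pushout.injective_prod_neg_inr R g f.rangeRestrict
  obtain ⟨s, hs⟩ := hext _ _ _ _ _ hα
    (Submodule.Pushout.surjective_coprod_desc R π f hg _ hπ) hexact.linearMap_ker_eq.symm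
  exact hf (eq_zero_of_rangeRestrict_prod_splits h₁ h₂ hneither.1 hneither.2
    (Submodule.Pushout.desc_comp_inr R π f hg) hexact hα hs)

/-- Happel–Ringel: Let `Λ` be a finite dimensional hereditary algebra over a
field `K` and `T₁`, `T₂` finite dimensional indecomposable `Λ`-modules with
`Ext¹_Λ(T₁, T₂) = 0`.  Then every nonzero homomorphism `T₂ → T₁` is either a monomorphism
or an epimorphism. -/
theorem happel_ringel
    (K : Type) [Field K] (Λ : Type) [Ring Λ] [Algebra K Λ] [FiniteDimensional K Λ]
    -- Λ is hereditary: every (right) ideal is projective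
    (hhered : ∀ I : Submodule Λ Λ, Module.Projective Λ I)
    (T₁ T₂ : Type) [AddCommGroup T₁] [Module Λ T₁] [AddCommGroup T₂] [Module Λ T₂]
    [Module K T₁] [IsScalarTower K Λ T₁] [FiniteDimensional K T₁]
    [Module K T₂] [IsScalarTower K Λ T₂] [FiniteDimensional K T₂]
    (h₁ : IsIndecomposableModule Λ T₁) (h₂ : IsIndecomposableModule Λ T₂)
    (hext : ExtOneVanish Λ T₁ T₂)
    (f : T₂ →ₗ[Λ] T₁) (hf : f ≠ 0) :
    Function.Injective f ∨ Function.Surjective f :=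
  happel_ringel_general K Λ hhered T₁ T₂ h₁ h₂ hext f hf
end

section
/- (Schofield) Let Λ be a finite dimensional hereditary algebra and let M_1, ..., M_k be pairwise nonisomorphic indecomposable Λ-modules with Ext^1_Λ(M_i, M_j) = 0 for all i, j. Then the modules can be renumbered so that Hom_Λ(M_j, M_i) = 0 for all j > i. -/
section

open Function LinearMap Module

section General

variable {Λ : Type*} [Ring Λ] {A B C : Type*} [AddCommGroup A] [Module Λ A]
  [AddCommGroup B] [Module Λ B] [AddCommGroup C] [Module Λ C]

theorem Module.Projective.of_surjective_of_projective_ker [Projective Λ B] (f : A →ₗ[Λ] B)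
    (hf : Surjective f) [Projective Λ (ker f)] : Projective Λ A := by
  obtain ⟨e, -, -⟩ := ((exact_subtype_ker_map f).split_tfae (ker f).injective_subtype hf).out 0 2
    |>.mp (f.exists_rightInverse_of_surjective (range_eq_top.mpr hf))
  exact .of_equiv e.symm

theorem LinearMap.exists_comp_eq_of_ker_le (π : A →ₗ[Λ] B) (hπ : Surjective π) (φ : A →ₗ[Λ] C)
    (h : ker π ≤ ker φ) : ∃ ψ : B →ₗ[Λ] C, ψ ∘ₗ π = φ :=
  ⟨(ker π).liftQ φ h ∘ₗ (π.quotKerEquivOfSurjective hπ).symm.toLinearMap, by ext; simp⟩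

theorem LinearMap.isNilpotent_comp_of_isNilpotent_comp (q : A →ₗ[Λ] B) (g : B →ₗ[Λ] A)
    (h : IsNilpotent (g ∘ₗ q)) : IsNilpotent (q ∘ₗ g) := by
  obtain ⟨n, hn⟩ := h
  have hpow : ∀ j, (q ∘ₗ g) ^ (j + 1) = q ∘ₗ ((g ∘ₗ q) ^ j) ∘ₗ g := by
    intro j
    induction j with
    | zero => rfl
    | succ j ih =>
      rw [pow_succ, ih, pow_succ, Module.End.mul_eq_comp, Module.End.mul_eq_comp]
      rfl
  exact ⟨n + 1, by rw [hpow, hn, zero_comp, comp_zero]⟩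

theorem projective_of_submodule_pi
    (hΛ : ∀ I : Submodule Λ Λ, Module.Projective Λ I) (m : ℕ) (N : Submodule Λ (Fin m → Λ)) :
    Module.Projective Λ N := by
  induction m with
  | zero => exact .of_basis (Module.Basis.empty (ι := Empty) N)
  | succ m ih =>
    let p : N →ₗ[Λ] Λ := (proj 0).comp N.subtype
    let tail : ker p →ₗ[Λ] (Fin m → Λ) := funLeft Λ Λ Fin.succ ∘ₗ N.subtype ∘ₗ (ker p).subtype
    have htail : Injective tail := by
      intro x y hxy
      refine Subtype.ext (Subtype.ext (funext (Fin.cases ?_ fun i => congrFun hxy i)))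
      exact (mem_ker.mp x.2).trans (mem_ker.mp y.2).symm
    have : Projective Λ (range p) := hΛ _
    have : Projective Λ (range tail) := ih (range tail)
    have : Projective Λ (ker p.rangeRestrict) := by
      rw [ker_rangeRestrict]
      exact .of_equiv (LinearEquiv.ofInjective tail htail).symm
    exact .of_surjective_of_projective_ker p.rangeRestrict p.surjective_rangeRestrict

end General

namespace ExtOneVanish

variable {Λ : Type} [Ring Λ] {X Y : Type} [AddCommGroup X] [Module Λ X] [AddCommGroup Y]
  [Module Λ Y]

theorem exists_leftInverse (hext : ExtOneVanish Λ Y X) {E : Type} [AddCommGroup E] [Module Λ E]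
    (i : X →ₗ[Λ] E) (p : E →ₗ[Λ] Y) (hi : Injective i) (hp : Surjective p)
    (hip : range i = ker p) : ∃ r : E →ₗ[Λ] X, r ∘ₗ i = LinearMap.id :=
  ((exact_iff.mpr hip.symm).split_tfae hi hp).out 0 1 |>.mp (hext E _ _ i p hi hp hip)

/-- The pushout of `ker π ↪ P` along `φ₀` is an extension of `Y` by `X`; it splits. -/
theorem exists_comp_subtype_eq (hext : ExtOneVanish Λ Y X) {P : Type} [AddCommGroup P]
    [Module Λ P] (π : P →ₗ[Λ] Y) (hπ : Surjective π) (φ₀ : ker π →ₗ[Λ] X) :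
    ∃ φ : P →ₗ[Λ] X, φ ∘ₗ (ker π).subtype = φ₀ := by
  let W := range (φ₀.prod (-(ker π).subtype))
  have hW : ∀ ω : ker π, W.mkQ (0, (ω : P)) = W.mkQ (φ₀ ω, 0) := fun ω =>
    (Submodule.Quotient.eq _).mpr ⟨-ω, by simp⟩
  let ι : X →ₗ[Λ] (X × P) ⧸ W := W.mkQ ∘ₗ inl Λ X P
  let σ : (X × P) ⧸ W →ₗ[Λ] Y := W.liftQ (π ∘ₗ snd Λ X P) (by rintro _ ⟨ω, rfl⟩; simp)
  have hι : Injective ι := by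
    refine (injective_iff_map_eq_zero ι).mpr fun x hx => ?_
    obtain ⟨ω, hω⟩ := (Submodule.Quotient.mk_eq_zero W).mp hx
    obtain rfl : ω = 0 := by simpa using congrArg Prod.snd hω
    simpa using (congrArg Prod.fst hω).symm
  have hσ : Surjective σ := fun y => by
    obtain ⟨p, rfl⟩ := hπ y
    exact ⟨W.mkQ (0, p), rfl⟩
  have hισ : range ι = ker σ := by
    refine le_antisymm (by rintro _ ⟨x, rfl⟩; simp [ι, σ]) fun e he => ?_
    obtain ⟨⟨x, p⟩, rfl⟩ := W.mkQ_surjective e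
    have hp : p ∈ ker π := by simpa [σ] using he
    exact ⟨x + φ₀ ⟨p, hp⟩, (Submodule.Quotient.eq _).mpr ⟨⟨p, hp⟩, by simp⟩⟩
  obtain ⟨r, hr⟩ := hext.exists_leftInverse ι σ hι hσ hισ
  refine ⟨r ∘ₗ W.mkQ ∘ₗ inr Λ X P, LinearMap.ext fun ω => ?_⟩
  show r (W.mkQ (0, (ω : P))) = φ₀ ω
  rw [hW]
  exact congr($hr (φ₀ ω))

end ExtOneVanish

theorem exists_comp_subtype_add_comp_eq_id {Λ : Type} [Ring Λ]
    (hΛ : ∀ I : Submodule Λ Λ, Module.Projective Λ I) {X Y : Type} [AddCommGroup X]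
    [Module Λ X] [AddCommGroup Y] [Module Λ Y] [Module.Finite Λ Y] (hext : ExtOneVanish Λ Y X)
    {I : Submodule Λ Y} (q : X →ₗ[Λ] I) (hq : Surjective q) :
    ∃ (g : I →ₗ[Λ] X) (h : Y →ₗ[Λ] I), h ∘ₗ I.subtype + q ∘ₗ g = LinearMap.id := by
  obtain ⟨m, π, hπ⟩ := Module.Finite.exists_fin' Λ Y
  let Ω := I.comap π
  have : Projective Λ Ω := projective_of_submodule_pi hΛ m Ω
  let πI : Ω →ₗ[Λ] I := π.restrict fun _ h => h
  have hπI : Surjective πI := fun y => by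
    obtain ⟨p, hp⟩ := hπ y
    exact ⟨⟨p, by simp [Ω, hp]⟩, Subtype.ext hp⟩
  obtain ⟨ψ, hψ⟩ := projective_lifting_property q πI hq
  have hker : ker π ≤ Ω := fun p hp => by simp [Ω, mem_ker.mp hp]
  obtain ⟨φ, hφ⟩ := hext.exists_comp_subtype_eq π hπ (ψ ∘ₗ Submodule.inclusion hker)
  have hφ_ker (p : _) (hp : π p = 0) : φ p = ψ ⟨p, hker hp⟩ := congr($hφ ⟨p, hp⟩)
  obtain ⟨h, hh⟩ := exists_comp_eq_of_ker_le π hπ (q ∘ₗ φ) fun p hp => by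
    change q (φ p) = 0
    rw [hφ_ker p hp, ← LinearMap.comp_apply, hψ]
    exact Subtype.ext (mem_ker.mp hp)
  obtain ⟨g, hg⟩ := exists_comp_eq_of_ker_le πI hπI (ψ - φ ∘ₗ Ω.subtype) fun p hp => by
    rw [mem_ker, LinearMap.sub_apply, sub_eq_zero, LinearMap.comp_apply, Submodule.subtype_apply,
      hφ_ker p congr(Subtype.val $hp)]
  refine ⟨g, h, LinearMap.ext fun y => ?_⟩
  obtain ⟨p, rfl⟩ := hπI y
  calc h (π p) + q (g (πI p)) = q (φ p) + q (ψ p - φ p) := by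
        rw [← LinearMap.comp_apply h, hh, ← LinearMap.comp_apply g, hg]; rfl
    _ = πI p := by rw [← map_add, add_sub_cancel, ← LinearMap.comp_apply, hψ]

namespace IsIndecomposableModule

variable {Λ : Type} [Ring Λ] {X Z : Type} [AddCommGroup X] [Module Λ X] [AddCommGroup Z]
  [Module Λ Z]

/-- Fitting's lemma. -/
theorem bijective_or_isNilpotent [IsNoetherian Λ X] [IsArtinian Λ X]
    (hX : IsIndecomposableModule Λ X) (a : Module.End Λ X) : Bijective a ∨ IsNilpotent a := by
  obtain ⟨n, hn⟩ := Filter.eventually_atTop.mp a.eventually_isCompl_ker_pow_range_pow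
  refine (hX.2 _ _ (hn (n + 1) n.le_succ)).imp (fun h => ?_) fun h => ⟨n + 1, range_eq_bot.mp h⟩
  refine IsArtinian.bijective_of_injective_endomorphism a (Injective.of_comp (f := ⇑(a ^ n)) ?_)
  rw [← Module.End.coe_mul, ← pow_succ, ← ker_eq_bot]
  exact h

theorem surjective_or_subsingleton_of_comp_eq_id (hX : IsIndecomposableModule Λ X)
    {s : Z →ₗ[Λ] X} {r : X →ₗ[Λ] Z} (h : r ∘ₗ s = LinearMap.id) :
    Surjective s ∨ Subsingleton Z := by
  have hrs (z : Z) : r (s z) = z := congr($h z)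
  have hproj : ∀ x : range s, (s.rangeRestrict ∘ₗ r) x = x := by
    rintro ⟨_, z, rfl⟩
    exact Subtype.ext (by simp [hrs])
  refine (hX.2 _ _ (isCompl_of_proj hproj)).symm.imp (fun h x => ⟨r x, ?_⟩) fun h => ?_
  · have : s (r x) - x ∈ ker (s.rangeRestrict ∘ₗ r) := by simp [hrs]
    rwa [h, Submodule.mem_bot, sub_eq_zero] at this
  · refine ⟨fun z z' => ?_⟩
    rw [← hrs z, ← hrs z', range_eq_bot.mp h]
    rfl

end IsIndecomposableModule

/-- The Happel–Ringel lemma. -/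
theorem injective_or_surjective_of_extOneVanish {Λ : Type} [Ring Λ]
    (hΛ : ∀ I : Submodule Λ Λ, Module.Projective Λ I) {X Y : Type} [AddCommGroup X]
    [Module Λ X] [AddCommGroup Y] [Module Λ Y] [IsNoetherian Λ X] [IsArtinian Λ X]
    [Module.Finite Λ Y] (hX : IsIndecomposableModule Λ X) (hY : IsIndecomposableModule Λ Y)
    (hext : ExtOneVanish Λ Y X) {f : X →ₗ[Λ] Y} (hf : f ≠ 0) :
    Injective f ∨ Surjective f := by
  obtain ⟨g, h, hgh⟩ :=
    exists_comp_subtype_add_comp_eq_id hΛ hext f.rangeRestrict f.surjective_rangeRestrict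
  rcases hX.bijective_or_isNilpotent (g ∘ₗ f.rangeRestrict) with hbij | hnil
  · exact .inl (injective_rangeRestrict_iff f |>.mp (Injective.of_comp hbij.1))
  · obtain ⟨u, hu⟩ := (isNilpotent_comp_of_isNilpotent_comp _ _ hnil).isUnit_one_sub
    have hsplit :
        ((u⁻¹ : (Module.End Λ (range f))ˣ) ∘ₗ h) ∘ₗ (range f).subtype = LinearMap.id := by
      rw [LinearMap.comp_assoc, eq_sub_of_add_eq hgh, ← Module.End.one_eq_id, ← hu,
        ← Module.End.mul_eq_comp, Units.inv_mul]
    rcases hY.surjective_or_subsingleton_of_comp_eq_id hsplit with hs | hs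
    · refine .inr fun y => ?_
      obtain ⟨⟨_, x, rfl⟩, rfl⟩ := hs y
      exact ⟨x, rfl⟩
    · exact absurd (range_eq_bot.mp (Submodule.eq_bot_of_subsingleton (p := range f))) hf

namespace Relation

variable {α : Type*} {R : α → α → Prop} {d : α → ℕ}

def AboveLevel (R : α → α → Prop) (d : α → ℕ) (m : ℕ) (a b : α) : Prop :=
  R a b ∧ m ≤ d a ∧ m ≤ d b

/-- Along a path of height `≥ m`, the vertices of height exactly `m` are valleys and can be
short-cut. -/
theorem transGen_aboveLevel_succ (hne : ∀ a b, R a b → d a ≠ d b)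
    (hshort : ∀ u v w, R u v → R v w → d v < d u → d v < d w → R u w) {m : ℕ} {x y : α}
    (hx : m < d x) (hxy : TransGen (AboveLevel R d m) x y) :
    TransGen (AboveLevel R d (m + 1)) x y ∨
      d y = m ∧ ∃ u, ReflTransGen (AboveLevel R d (m + 1)) x u ∧ AboveLevel R d m u y := by
  induction hxy with
  | single hxy =>
    rcases hxy.2.2.lt_or_eq with hy | hy
    · exact .inl (.single ⟨hxy.1, hx, hy⟩)
    · exact .inr ⟨hy.symm, x, .refl, hxy⟩
  | @tail y z _ hyz ih =>
    have hz : m < d z ∨ d z = m := hyz.2.2.lt_or_eq.imp_right Eq.symm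
    rcases ih with hxy | ⟨hy, u, hxu, huy⟩
    · rcases hz with hz | hz
      · obtain ⟨_, -, hy⟩ := TransGen.tail'_iff.mp hxy
        exact .inl (hxy.tail ⟨hyz.1, hy.2.2, hz⟩)
      · exact .inr ⟨hz, y, hxy.to_reflTransGen, hyz⟩
    · have hu : m < d u := huy.2.1.lt_of_ne fun h => hne _ _ huy.1 (h ▸ hy).symm
      have hz : m < d z := hz.resolve_right fun h => hne _ _ hyz.1 (hy.trans h.symm)
      exact .inl (TransGen.tail' hxu ⟨hshort u y z huy.1 hyz.1 (hy ▸ hu) (hy ▸ hz), hu, hz⟩)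

theorem not_transGen_aboveLevel_self (hne : ∀ a b, R a b → d a ≠ d b)
    (hshort : ∀ u v w, R u v → R v w → d v < d u → d v < d w → R u w) (n : ℕ) {m : ℕ}
    (hd : ∀ a, d a < m + n) (a : α) :
    ¬ TransGen (AboveLevel R d m) a a := by
  induction n generalizing m a with
  | zero =>
    intro h
    obtain ⟨_, hab, -⟩ := TransGen.head'_iff.mp h
    exact (hab.2.1.trans_lt (hd a)).false
  | succ n ih =>
    intro h
    obtain ⟨b, hb, hbb⟩ : ∃ b, m < d b ∧ TransGen (AboveLevel R d m) b b := by
      obtain ⟨b, hab, hba⟩ := TransGen.head'_iff.mp h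
      rcases hab.2.1.lt_or_eq with ha | ha
      · exact ⟨a, ha, h⟩
      · exact ⟨b, hab.2.2.lt_of_ne (ha ▸ hne a b hab.1), TransGen.tail' hba hab⟩
    rcases transGen_aboveLevel_succ hne hshort hb hbb with hbb | ⟨hb', -⟩
    · exact ih (fun a => (hd a).trans_eq (by omega)) b hbb
    · exact hb.ne' hb'

theorem not_transGen_self_of_shortcut [Finite α] (hne : ∀ a b, R a b → d a ≠ d b)
    (hshort : ∀ u v w, R u v → R v w → d v < d u → d v < d w → R u w) (a : α) :
    ¬ TransGen R a a := by
  obtain ⟨B, hB⟩ := (Set.finite_range d).bddAbove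
  refine fun h => not_transGen_aboveLevel_self hne hshort (B + 1) (m := 0)
    (fun a => by have := hB ⟨a, rfl⟩; omega) a ?_
  exact TransGen.mono (fun _ _ hab => ⟨hab, Nat.zero_le _, Nat.zero_le _⟩) _ _ h

end Relation

theorem exists_perm_forall_lt_not_rel {k : ℕ} {R : Fin k → Fin k → Prop}
    (hR : ∀ a, ¬ Relation.TransGen R a a) :
    ∃ e : Equiv.Perm (Fin k), ∀ i j, i < j → ¬ R (e j) (e i) := by
  have : IsTrans (Fin k) (Relation.TransGen R) := ⟨fun _ _ _ => Relation.TransGen.trans⟩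
  have : Std.Irrefl (Relation.TransGen R) := ⟨hR⟩
  have : IsWellFounded (Fin k) R :=
    ⟨Subrelation.wf .single (Finite.wellFounded_of_trans_of_irrefl (Relation.TransGen R))⟩
  let rank := IsWellFounded.rank R
  exact ⟨Tuple.sort rank, fun i j hij hji =>
    (Tuple.monotone_sort rank hij.le).not_gt (IsWellFounded.rank_lt_of_rel hji)⟩

def HasNonzeroHom (Λ : Type) [Ring Λ] {k : ℕ} (M : Fin k → Type) [∀ i, AddCommGroup (M i)]
    [∀ i, Module Λ (M i)] (i j : Fin k) : Prop :=
  i ≠ j ∧ ∃ f : M i →ₗ[Λ] M j, f ≠ 0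

section FiniteDimensional

variable (K : Type) [Field K] {Λ : Type} [Ring Λ] [Algebra K Λ]

theorem injective_and_finrank_lt_or_surjective_and_finrank_lt
    (hΛ : ∀ I : Submodule Λ Λ, Module.Projective Λ I) {X Y : Type}
    [AddCommGroup X] [Module Λ X] [Module K X] [IsScalarTower K Λ X] [FiniteDimensional K X]
    [AddCommGroup Y] [Module Λ Y] [Module K Y] [IsScalarTower K Λ Y] [FiniteDimensional K Y]
    (hX : IsIndecomposableModule Λ X) (hY : IsIndecomposableModule Λ Y)
    (hext : ExtOneVanish Λ Y X) (hXY : IsEmpty (X ≃ₗ[Λ] Y)) {f : X →ₗ[Λ] Y} (hf : f ≠ 0) :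
    Injective f ∧ finrank K X < finrank K Y ∨ Surjective f ∧ finrank K Y < finrank K X := by
  have : IsNoetherian Λ X := isNoetherian_of_tower K inferInstance
  have : IsArtinian Λ X := isArtinian_of_tower K inferInstance
  have : Module.Finite Λ Y := .of_restrictScalars_finite K Λ Y
  have hbij : ¬ Bijective f := fun h => hXY.false (.ofBijective f h)
  rcases injective_or_surjective_of_extOneVanish hΛ hX hY hext hf with hi | hs
  · refine .inl ⟨hi, (finrank_le_finrank_of_injective (f := f.restrictScalars K) hi).lt_of_ne
      fun h => hbij ⟨hi, ?_⟩⟩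
    exact (injective_iff_surjective_of_finrank_eq_finrank h (f := f.restrictScalars K)).mp hi
  · refine .inr ⟨hs, (finrank_le_finrank_of_surjective (f := f.restrictScalars K) hs).lt_of_ne
      fun h => hbij ⟨?_, hs⟩⟩
    exact (injective_iff_surjective_of_finrank_eq_finrank h.symm (f := f.restrictScalars K)).mpr hs

theorem finrank_le_of_comp_ne_zero (hΛ : ∀ I : Submodule Λ Λ, Module.Projective Λ I)
    {X Y : Type} [AddCommGroup X] [Module Λ X] [Module K X] [IsScalarTower K Λ X]
    [FiniteDimensional K X] [AddCommGroup Y] [Module Λ Y] [Module K Y] [IsScalarTower K Λ Y]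
    [FiniteDimensional K Y] (hX : IsIndecomposableModule Λ X) (hext : ExtOneVanish Λ X X)
    {f : X →ₗ[Λ] Y} {g : Y →ₗ[Λ] X} (hgf : g ∘ₗ f ≠ 0) : finrank K X ≤ finrank K Y := by
  have : IsNoetherian Λ X := isNoetherian_of_tower K inferInstance
  have : IsArtinian Λ X := isArtinian_of_tower K inferInstance
  have : Module.Finite Λ X := .of_restrictScalars_finite K Λ X
  rcases injective_or_surjective_of_extOneVanish hΛ hX hX hext hgf with hi | hs
  · exact finrank_le_finrank_of_injective (f := f.restrictScalars K) (Injective.of_comp hi)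
  · exact finrank_le_finrank_of_surjective (f := g.restrictScalars K) (Surjective.of_comp hs)

variable {k : ℕ} {M : Fin k → Type} [∀ i, AddCommGroup (M i)] [∀ i, Module Λ (M i)]
  [∀ i, Module K (M i)] [∀ i, IsScalarTower K Λ (M i)] [∀ i, FiniteDimensional K (M i)]

theorem HasNonzeroHom.finrank_ne (hΛ : ∀ I : Submodule Λ Λ, Module.Projective Λ I)
    (hind : ∀ i, IsIndecomposableModule Λ (M i))
    (hnoniso : ∀ i j, i ≠ j → IsEmpty (M i ≃ₗ[Λ] M j))
    (hext : ∀ i j, ExtOneVanish Λ (M i) (M j)) {i j : Fin k} (h : HasNonzeroHom Λ M i j) :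
    finrank K (M i) ≠ finrank K (M j) := by
  obtain ⟨hij, f, hf⟩ := h
  rcases injective_and_finrank_lt_or_surjective_and_finrank_lt K hΛ (hind i) (hind j) (hext j i)
    (hnoniso i j hij) hf with h | h
  exacts [h.2.ne, h.2.ne']

theorem HasNonzeroHom.trans_of_finrank_lt (hΛ : ∀ I : Submodule Λ Λ, Module.Projective Λ I)
    (hind : ∀ i, IsIndecomposableModule Λ (M i))
    (hnoniso : ∀ i j, i ≠ j → IsEmpty (M i ≃ₗ[Λ] M j))
    (hext : ∀ i j, ExtOneVanish Λ (M i) (M j)) {u v w : Fin k} (huv : HasNonzeroHom Λ M u v)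
    (hvw : HasNonzeroHom Λ M v w) (hvu : finrank K (M v) < finrank K (M u)) :
    HasNonzeroHom Λ M u w := by
  obtain ⟨huv, f, hf⟩ := huv
  obtain ⟨-, g, hg⟩ := hvw
  have hfs : Surjective f :=
    ((injective_and_finrank_lt_or_surjective_and_finrank_lt K hΛ (hind u) (hind v) (hext v u)
      (hnoniso u v huv) hf).resolve_left fun h => hvu.not_gt h.2).1
  have hgf : g ∘ₗ f ≠ 0 := fun h => hg <| LinearMap.ext fun y => by
    obtain ⟨x, rfl⟩ := hfs y
    exact congr($h x)
  refine ⟨fun huw => ?_, g ∘ₗ f, hgf⟩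
  subst huw
  exact (finrank_le_of_comp_ne_zero K hΛ (hind u) (hext u u) hgf).not_gt hvu

end FiniteDimensional

end

theorem schofield_exceptional_ordering_general
    (K : Type) [Field K] (Λ : Type) [Ring Λ] [Algebra K Λ]
    -- Λ is hereditary: every (right) ideal is projective
    (hhered : ∀ I : Submodule Λ Λ, Module.Projective Λ I)
    (k : ℕ) (M : Fin k → Type)
    [∀ i, AddCommGroup (M i)] [∀ i, Module Λ (M i)]
    [∀ i, Module K (M i)] [∀ i, IsScalarTower K Λ (M i)] [∀ i, FiniteDimensional K (M i)]
    (hind : ∀ i, IsIndecomposableModule Λ (M i))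
    (hnoniso : ∀ i j, i ≠ j → IsEmpty (M i ≃ₗ[Λ] M j))
    (hext : ∀ i j, ExtOneVanish Λ (M i) (M j)) :
    ∃ e : Equiv.Perm (Fin k), ∀ i j : Fin k, i < j →
      ∀ f : M (e j) →ₗ[Λ] M (e i), f = 0 := by
  have hacyclic : ∀ a, ¬ Relation.TransGen (HasNonzeroHom Λ M) a a :=
    Relation.not_transGen_self_of_shortcut (d := fun i => Module.finrank K (M i))
      (fun _ _ h => h.finrank_ne K hhered hind hnoniso hext)
      (fun _ _ _ huv hvw hvu _ => huv.trans_of_finrank_lt K hhered hind hnoniso hext hvw hvu)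
  obtain ⟨e, he⟩ := exists_perm_forall_lt_not_rel hacyclic
  refine ⟨e, fun i j hij f => ?_⟩
  by_contra hf
  exact he i j hij ⟨e.injective.ne hij.ne', f, hf⟩

/-- Schofield: Let `Λ` be a finite dimensional hereditary algebra over a
field `K` and `M₁, …, M_k` pairwise nonisomorphic finite dimensional indecomposable
`Λ`-modules with `Ext¹_Λ(M_i, M_j) = 0` for all `i, j`.  Then the modules can be
renumbered so that `Hom_Λ(M_j, M_i) = 0` for all `j > i`, i.e. they form an exceptional
sequence. -/
theorem schofield_exceptional_ordering
    (K : Type) [Field K] (Λ : Type) [Ring Λ] [Algebra K Λ] [FiniteDimensional K Λ]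
    -- Λ is hereditary: every (right) ideal is projective
    (hhered : ∀ I : Submodule Λ Λ, Module.Projective Λ I)
    (k : ℕ) (M : Fin k → Type)
    [∀ i, AddCommGroup (M i)] [∀ i, Module Λ (M i)]
    [∀ i, Module K (M i)] [∀ i, IsScalarTower K Λ (M i)] [∀ i, FiniteDimensional K (M i)]
    (hind : ∀ i, IsIndecomposableModule Λ (M i))
    (hnoniso : ∀ i j, i ≠ j → IsEmpty (M i ≃ₗ[Λ] M j))
    (hext : ∀ i j, ExtOneVanish Λ (M i) (M j)) :
    ∃ e : Equiv.Perm (Fin k), ∀ i j : Fin k, i < j →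
      ∀ f : M (e j) →ₗ[Λ] M (e i), f = 0 :=
  schofield_exceptional_ordering_general K Λ hhered k M hind hnoniso hext
end

section
/- Let Λ be a finite dimensional hereditary algebra over a field K with indecomposable projectives P_1, ..., P_n ordered so that Hom_Λ(P_j, P_i) = 0 for j > i. Then every group homomorphism Aut_Λ(P(α)) → K^* factors through the projection to the product ∏_i Aut_Λ(P_i^{α_i}), where P(α) = ⊕_i P_i^{α_i}. -/
set_option linter.unusedVariables false


section Abstract

variable {R : Type*} [Ring R] {A : Type*} [CommGroup A]

private lemma comm_abelian (a b : A) : a * b * a⁻¹ * b⁻¹ = 1 := by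
  rw [mul_comm a b]; group

/-- A square-zero element gives a unit `1 + C`. -/
private def sqUnit (X : R) (hX : X * X = 0) : Rˣ where
  val := 1 + X
  inv := 1 - X
  val_inv := by rw [show (1+X)*(1-X) = 1 - X*X by noncomm_ring, hX, sub_zero]
  inv_val := by rw [show (1-X)*(1+X) = 1 - X*X by noncomm_ring, hX, sub_zero]

@[simp] private lemma sqUnit_val (X : R) (hX : X * X = 0) : ((sqUnit X hX : Rˣ) : R) = 1 + X := rfl

/-- Column lemma: a unit of the form `1 + C` with `C` a "single column" square-zero
element is killed by any character, provided we have suitable central elements. -/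
private lemma col_char (φ : Rˣ →* A) (σ ρ τ : R)
    (hcσ : ∀ f : R, σ * f = f * σ) (hcρ : ∀ f : R, ρ * f = f * ρ)
    (hcτ : ∀ f : R, τ * f = f * τ)
    (hρσ : ρ * (σ - 1) = 1)
    (hτσ : τ * σ = 1) (hστ : σ * τ = 1)
    (ε : R) (hε : ε * ε = ε)
    (C : R) (hC2 : C * C = 0) (hεC : ε * C = 0) (hCε : C * ε = C)
    (v : Rˣ) (hv : (v : R) = 1 + C) : φ v = 1 := by
  have hc'σ : ∀ f : R, (σ - 1) * f = f * (σ - 1) := by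
    intro f; rw [sub_mul, mul_sub, hcσ, one_mul, mul_one]
  have hc'τ : ∀ f : R, (τ - 1) * f = f * (τ - 1) := by
    intro f; rw [sub_mul, mul_sub, hcτ, one_mul, mul_one]
  set C' : R := ρ * C with hC'def
  have hC'2 : C' * C' = 0 := by
    calc ρ * C * (ρ * C) = ρ * (C * ρ) * C := by noncomm_ring
    _ = ρ * (ρ * C) * C := by rw [← hcρ]
    _ = ρ * ρ * (C * C) := by noncomm_ring
    _ = 0 := by rw [hC2, mul_zero]
  have hεC' : ε * C' = 0 := by
    rw [hC'def, ← mul_assoc, ← hcρ, mul_assoc, hεC, mul_zero]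
  have hC'ε : C' * ε = C' := by rw [hC'def, mul_assoc, hCε]
  -- the diagonal unit
  have hmix : ∀ μ ν : R, μ * ν = 1 → (∀ f : R, μ * f = f * μ) → (∀ f : R, ν * f = f * ν) →
      (1 + (μ-1)*ε) * (1 + (ν-1)*ε) = 1 := by
    intro μ ν hμν hcμ hcν
    have hc'ν : ∀ f : R, (ν - 1) * f = f * (ν - 1) := by
      intro f; rw [sub_mul, mul_sub, hcν, one_mul, mul_one]
    have h1 : ε * ((ν-1)*ε) = (ν-1)*ε := by
      rw [← mul_assoc, ← hc'ν, mul_assoc, hε]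
    calc (1 + (μ-1)*ε) * (1 + (ν-1)*ε)
        = 1 + (ν-1)*ε + (μ-1)*ε + (μ-1)*(ε*((ν-1)*ε)) := by noncomm_ring
      _ = 1 + ((ν-1) + (μ-1) + (μ-1)*(ν-1))*ε := by rw [h1]; noncomm_ring
      _ = 1 + (μ*ν - 1)*ε := by noncomm_ring
      _ = 1 := by rw [hμν, sub_self, zero_mul, add_zero]
  let uD : Rˣ := ⟨1 + (τ-1)*ε, 1 + (σ-1)*ε, hmix τ σ hτσ hcτ hcσ, hmix σ τ hστ hcσ hcτ⟩
  let uC' : Rˣ := sqUnit C' hC'2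
  have hstep1 : (1 + (τ-1)*ε) * (1 + C') = 1 + (τ-1)*ε + C' := by
    calc (1 + (τ-1)*ε) * (1 + C') = 1 + (τ-1)*ε + C' + (τ-1)*(ε*C') := by noncomm_ring
    _ = 1 + (τ-1)*ε + C' := by rw [hεC', mul_zero, add_zero]
  have hstep2 : (1 + (τ-1)*ε + C') * (1 + (σ-1)*ε) = 1 + σ*C' := by
    have h2 : C' * ((σ-1)*ε) = (σ-1)*C' := by rw [← mul_assoc, ← hc'σ, mul_assoc, hC'ε]
    calc (1 + (τ-1)*ε + C') * (1 + (σ-1)*ε)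
        = (1 + (τ-1)*ε) * (1 + (σ-1)*ε) + C' + C'*((σ-1)*ε) := by noncomm_ring
      _ = 1 + C' + (σ-1)*C' := by rw [hmix τ σ hτσ hcτ hcσ, h2]
      _ = 1 + σ*C' := by noncomm_ring
  have hstep3 : (1 + σ*C') * (1 - C') = 1 + C := by
    calc (1 + σ*C') * (1 - C') = 1 + σ*C' - C' - σ*(C'*C') := by noncomm_ring
      _ = 1 + (σ - 1)*C' := by rw [hC'2, mul_zero, sub_zero]; noncomm_ring
      _ = 1 + ((σ-1)*ρ)*C := by rw [hC'def, mul_assoc]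
      _ = 1 + C := by rw [← hcρ, hρσ, one_mul]
  have hveq : v = uD * uC' * uD⁻¹ * uC'⁻¹ := by
    apply Units.ext
    have hco : ((uD * uC' * uD⁻¹ * uC'⁻¹ : Rˣ) : R)
        = ((1 + (τ-1)*ε) * (1 + C') * (1 + (σ-1)*ε)) * (1 - C') := by
      simp only [Units.val_mul]
      rfl
    rw [hv, hco, hstep1, hstep2, hstep3]
  rw [hveq, map_mul, map_mul, map_mul, map_inv, map_inv]
  exact comm_abelian _ _


private lemma main_ind (n : ℕ) (e : Fin n → R)
    (esum : ∑ i, e i = 1)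
    (emul : ∀ i j : Fin n, e i * e j = if i = j then e i else 0)
    (φ : Rˣ →* A) (σ ρ τ : R)
    (hcσ : ∀ f : R, σ * f = f * σ) (hcρ : ∀ f : R, ρ * f = f * ρ)
    (hcτ : ∀ f : R, τ * f = f * τ)
    (hρσ : ρ * (σ - 1) = 1) (hτσ : τ * σ = 1) (hστ : σ * τ = 1) :
    ∀ k : ℕ, ∀ (u : Rˣ) (N : R), (u : R) = 1 + N →
      (∀ i j : Fin n, i ≤ j → e i * N * e j = 0) →
      (∀ j : Fin n, (j : ℕ) + k < n → N * e j = 0) → φ u = 1 := by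
  intro k
  induction k with
  | zero =>
    intro u N hu hN1 hN2
    have hN : N = 0 := by
      have h1 : N = ∑ j, N * e j := by rw [← Finset.mul_sum, esum, mul_one]
      rw [h1]
      exact Finset.sum_eq_zero fun j _ => hN2 j (by have := j.isLt; omega)
    have : u = 1 := Units.ext (by rw [hu, hN, add_zero]; rfl)
    rw [this, map_one]
  | succ k ih =>
    intro u N hu hN1 hN2
    by_cases hnk : n ≤ k
    · exact ih u N hu hN1 (fun j hj => absurd hj (by omega))
    · set j₀ : Fin n := ⟨n - 1 - k, by omega⟩ with hj₀
      have hcol : ∀ j : Fin n, (j : ℕ) < n - 1 - k → N * e j = 0 := fun j hj =>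
        hN2 j (by omega)
      have hrow : e j₀ * N = 0 := by
        have h1 : e j₀ * N = ∑ j, e j₀ * N * e j := by rw [← Finset.mul_sum, esum, mul_one]
        rw [h1]
        apply Finset.sum_eq_zero
        intro j _
        rcases le_or_gt j₀ j with hle | hlt
        · exact hN1 j₀ j hle
        · rw [mul_assoc, hcol j hlt, mul_zero]
      have hC2 : (N * e j₀) * (N * e j₀) = 0 := by
        calc (N * e j₀) * (N * e j₀) = N * ((e j₀ * N) * e j₀) := by noncomm_ring
          _ = 0 := by rw [hrow, zero_mul, mul_zero]
      have hCN : (N * e j₀) * N = 0 := by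
        calc (N * e j₀) * N = N * (e j₀ * N) := by noncomm_ring
          _ = 0 := by rw [hrow, mul_zero]
      have hεC : e j₀ * (N * e j₀) = 0 := by rw [← mul_assoc, hrow, zero_mul]
      have hCε : (N * e j₀) * e j₀ = N * e j₀ := by rw [mul_assoc, emul, if_pos rfl]
      have hM1 : ∀ i j : Fin n, i ≤ j → e i * (N - N * e j₀) * e j = 0 := by
        intro i j hij
        have hexp : e i * (N - N * e j₀) * e j
            = e i * N * e j - e i * N * (e j₀ * e j) := by noncomm_ring
        rw [hexp, hN1 i j hij]
        by_cases hjj : j₀ = j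
        · subst hjj
          rw [emul, if_pos rfl, hN1 i j₀ hij, sub_zero]
        · rw [emul, if_neg hjj, mul_zero, sub_zero]
      have hM2 : ∀ j : Fin n, (j : ℕ) + k < n → (N - N * e j₀) * e j = 0 := by
        intro j hj
        have hexp : (N - N * e j₀) * e j = N * e j - N * (e j₀ * e j) := by noncomm_ring
        rw [hexp]
        by_cases hjj : j₀ = j
        · subst hjj
          rw [emul, if_pos rfl, sub_self]
        · rw [emul, if_neg hjj, mul_zero, sub_zero]
          apply hcol
          have hne : (j : ℕ) ≠ n - 1 - k := by
            intro hh; exact hjj (Fin.ext (by rw [hh]))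
          omega
      let uC : Rˣ := sqUnit (N * e j₀) hC2
      have hval : ((uC⁻¹ * u : Rˣ) : R) = 1 + (N - N * e j₀) := by
        have hinv : ((uC⁻¹ : Rˣ) : R) = 1 - N * e j₀ := rfl
        rw [Units.val_mul, hinv, hu]
        calc (1 - N * e j₀) * (1 + N)
            = 1 + (N - N * e j₀) - (N * e j₀) * N := by noncomm_ring
          _ = 1 + (N - N * e j₀) := by rw [hCN, sub_zero]
      have h1 : φ (uC⁻¹ * u) = 1 := ih _ _ hval hM1 hM2
      have h2 : φ uC = 1 :=
        col_char φ σ ρ τ hcσ hcρ hcτ hρσ hτσ hστ (e j₀) (by rw [emul, if_pos rfl])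
          (N * e j₀) hC2 hεC hCε uC rfl
      have h3 : φ u = φ uC * φ (uC⁻¹ * u) := by rw [← map_mul, mul_inv_cancel_left]
      rw [h3, h1, h2, one_mul]

private lemma diag_mul (n : ℕ) (e : Fin n → R)
    (esum : ∑ i, e i = 1)
    (emul : ∀ i j : Fin n, e i * e j = if i = j then e i else 0)
    (tri : ∀ (f : R) (i j : Fin n), i < j → e i * f * e j = 0)
    (f f' : R) (i : Fin n) :
    e i * (f * f') * e i = (e i * f * e i) * (e i * f' * e i) := by
  have h1 : e i * (f * f') * e i = ∑ j, (e i * f) * (e j * (f' * e i)) := by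
    calc e i * (f * f') * e i = (e i * f) * ((∑ j, e j) * (f' * e i)) := by
          rw [esum]; noncomm_ring
      _ = (e i * f) * (∑ j, e j * (f' * e i)) := by rw [Finset.sum_mul]
      _ = ∑ j, (e i * f) * (e j * (f' * e i)) := by rw [Finset.mul_sum]
  rw [h1, Finset.sum_eq_single i]
  · conv_rhs => rw [show (e i * f * e i) * (e i * f' * e i)
      = (e i * f) * ((e i * e i) * (f' * e i)) from by noncomm_ring]
    rw [emul, if_pos rfl]
  · intro j _ hji
    rcases lt_or_gt_of_ne hji with hlt | hgt
    · rw [show (e i * f) * (e j * (f' * e i)) = (e i * f) * (e j * f' * e i) from by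
        noncomm_ring, tri f' j i hlt, mul_zero]
    · rw [show (e i * f) * (e j * (f' * e i)) = (e i * f * e j) * (f' * e i) from by
        noncomm_ring, tri f i j hgt, zero_mul]
  · intro hmem; exact absurd (Finset.mem_univ i) hmem

private lemma abstract_char (n : ℕ) (e : Fin n → R)
    (esum : ∑ i, e i = 1)
    (emul : ∀ i j : Fin n, e i * e j = if i = j then e i else 0)
    (tri : ∀ (f : R) (i j : Fin n), i < j → e i * f * e j = 0)
    (φ : Rˣ →* A) (σ ρ τ : R)
    (hcσ : ∀ f : R, σ * f = f * σ) (hcρ : ∀ f : R, ρ * f = f * ρ)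
    (hcτ : ∀ f : R, τ * f = f * τ)
    (hρσ : ρ * (σ - 1) = 1) (hτσ : τ * σ = 1) (hστ : σ * τ = 1)
    (g h : Rˣ) (hbl : ∀ i : Fin n, e i * (g : R) * e i = e i * (h : R) * e i) :
    φ g = φ h := by
  have hdiag : ∀ i : Fin n, e i * ((g * h⁻¹ : Rˣ) : R) * e i = e i := by
    intro i
    calc e i * ((g * h⁻¹ : Rˣ) : R) * e i
        = (e i * (g : R) * e i) * (e i * ((h⁻¹ : Rˣ) : R) * e i) := by
          rw [Units.val_mul]; exact diag_mul n e esum emul tri _ _ i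
      _ = (e i * (h : R) * e i) * (e i * ((h⁻¹ : Rˣ) : R) * e i) := by rw [hbl i]
      _ = e i * ((h * h⁻¹ : Rˣ) : R) * e i := by
          rw [Units.val_mul]; exact (diag_mul n e esum emul tri _ _ i).symm
      _ = e i := by rw [mul_inv_cancel, Units.val_one, mul_one, emul, if_pos rfl]
  set N : R := ((g * h⁻¹ : Rˣ) : R) - 1 with hNdef
  have hu : ((g * h⁻¹ : Rˣ) : R) = 1 + N := by rw [hNdef]; noncomm_ring
  have hN1 : ∀ i j : Fin n, i ≤ j → e i * N * e j = 0 := by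
    intro i j hij
    have hexp : e i * N * e j = e i * ((g * h⁻¹ : Rˣ) : R) * e j - e i * e j := by
      rw [hNdef]; noncomm_ring
    rw [hexp]
    rcases eq_or_lt_of_le hij with heq | hlt
    · subst heq
      rw [hdiag i, emul, if_pos rfl, sub_self]
    · rw [tri _ i j hlt, emul, if_neg (Fin.ne_of_lt hlt), zero_sub, neg_eq_zero]
  have hone : φ (g * h⁻¹) = 1 :=
    main_ind n e esum emul φ σ ρ τ hcσ hcρ hcτ hρσ hτσ hστ n (g * h⁻¹) N hu hN1
      (fun j hj => absurd hj (by have := j.isLt; omega))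
  rwa [map_mul, map_inv, mul_inv_eq_one] at hone

end Abstract


section Concrete

variable (K : Type) [Field K] (Λ : Type) [Ring Λ] [Algebra K Λ]
variable {n : ℕ} (P : Fin n → Type) [∀ i, AddCommGroup (P i)] [∀ i, Module Λ (P i)]
variable (α : Fin n → ℕ)

private def eIdem (i : Fin n) : Module.End Λ (∀ i, Fin (α i) → P i) :=
  (LinearMap.single Λ (fun i => Fin (α i) → P i) i).comp (LinearMap.proj i)

private lemma eIdem_apply (i : Fin n) (x : ∀ i, Fin (α i) → P i) :
    eIdem Λ P α i x = Pi.single i (x i) := rfl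

private lemma eIdem_sum : ∑ i, eIdem Λ P α i = 1 := by
  apply LinearMap.ext; intro x
  rw [LinearMap.sum_apply]
  simp only [eIdem_apply]
  rw [Finset.univ_sum_single]
  rfl

private lemma eIdem_mul (i j : Fin n) :
    eIdem Λ P α i * eIdem Λ P α j = if i = j then eIdem Λ P α i else 0 := by
  by_cases hij : i = j
  · subst hij; rw [if_pos rfl]
    apply LinearMap.ext; intro x
    simp only [Module.End.mul_apply, eIdem_apply]
    rw [Pi.single_eq_same]
  · rw [if_neg hij]
    apply LinearMap.ext; intro x
    simp only [Module.End.mul_apply, eIdem_apply, LinearMap.zero_apply]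
    rw [Pi.single_eq_of_ne hij, Pi.single_zero]

private lemma eIdem_tri
    (hP : ∀ i j : Fin n, i < j → ∀ f : P j →ₗ[Λ] P i, f = 0)
    (f : Module.End Λ (∀ i, Fin (α i) → P i)) (i j : Fin n) (hij : i < j) :
    eIdem Λ P α i * f * eIdem Λ P α j = 0 := by
  have hT : (LinearMap.proj i).comp
      (f.comp (LinearMap.single Λ (fun i => Fin (α i) → P i) j)) = 0 := by
    apply LinearMap.pi_ext
    intro b p
    funext a
    have hcomp : (LinearMap.proj a).comp
        (((LinearMap.proj i).comp
          (f.comp (LinearMap.single Λ (fun i => Fin (α i) → P i) j))).comp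
        (LinearMap.single Λ (fun _ : Fin (α j) => P j) b)) = 0 := hP i j hij _
    have h2 := LinearMap.congr_fun hcomp p
    simpa using h2
  have key : ∀ y : Fin (α j) → P j,
      (f ((Pi.single j y : ∀ i, Fin (α i) → P i))) i = 0 := by
    intro y
    have h3 := LinearMap.congr_fun hT y
    simpa using h3
  apply LinearMap.ext; intro x
  simp only [Module.End.mul_apply, eIdem_apply, LinearMap.zero_apply]
  rw [key, Pi.single_zero]

private def scal (t : K) : Module.End Λ (∀ i, Fin (α i) → P i) where
  toFun x := algebraMap K Λ t • x
  map_add' x y := smul_add _ x y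
  map_smul' a x := by
    simp only [RingHom.id_apply]
    rw [smul_smul, smul_smul, Algebra.commutes]

private lemma scal_mul (t s : K) :
    scal K Λ P α t * scal K Λ P α s = scal K Λ P α (t * s) := by
  apply LinearMap.ext; intro x
  show algebraMap K Λ t • (algebraMap K Λ s • x) = algebraMap K Λ (t * s) • x
  rw [smul_smul, ← map_mul]

private lemma scal_one : scal K Λ P α 1 = 1 := by
  apply LinearMap.ext; intro x
  show algebraMap K Λ 1 • x = x
  rw [map_one, one_smul]

private lemma scal_sub (t s : K) :
    scal K Λ P α t - scal K Λ P α s = scal K Λ P α (t - s) := by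
  apply LinearMap.ext; intro x
  show algebraMap K Λ t • x - algebraMap K Λ s • x = algebraMap K Λ (t - s) • x
  rw [map_sub, sub_smul]

private lemma scal_central (t : K) (f : Module.End Λ (∀ i, Fin (α i) → P i)) :
    scal K Λ P α t * f = f * scal K Λ P α t := by
  apply LinearMap.ext; intro x
  show algebraMap K Λ t • f x = f (algebraMap K Λ t • x)
  rw [map_smul]

end Concrete



/-- Let `Λ` be a finite dimensional hereditary algebra over a field `K` with
indecomposable projectives `P₁, …, Pₙ` ordered so that `Hom_Λ(P_j, P_i) = 0` for `j > i`,
and let `P(α) = ⊕_i P_i^{α_i}` (realized as `Π i, Fin (α i) → P i`).  Then every group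
homomorphism `Aut_Λ(P(α)) → K^*` factors through the projection onto
`∏_i Aut_Λ(P_i^{α_i})` given by taking the diagonal blocks: if two automorphisms have the
same diagonal blocks then they have the same image. -/
theorem character_factors_through_diagonal_blocks
    (K : Type) [Field K] (Λ : Type) [Ring Λ] [Algebra K Λ] [FiniteDimensional K Λ]
    (n : ℕ) (P : Fin n → Type)
    [∀ i, AddCommGroup (P i)] [∀ i, Module Λ (P i)]
    (hproj : ∀ i, Module.Projective Λ (P i))
    (hP : ∀ i j : Fin n, i < j → ∀ f : P j →ₗ[Λ] P i, f = 0)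
    (α : Fin n → ℕ)
    (φ : (Module.End Λ (∀ i, Fin (α i) → P i))ˣ →* Kˣ)
    (g h : (Module.End Λ (∀ i, Fin (α i) → P i))ˣ)
    (hblocks : ∀ i : Fin n,
      (LinearMap.proj i).comp ((g : Module.End Λ (∀ i, Fin (α i) → P i)).comp
          (LinearMap.single Λ (fun i => Fin (α i) → P i) i))
        = (LinearMap.proj i).comp ((h : Module.End Λ (∀ i, Fin (α i) → P i)).comp
          (LinearMap.single Λ (fun i => Fin (α i) → P i) i))) :
    φ g = φ h := by
  by_cases hK : ∀ x : Kˣ, x = 1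
  · rw [hK (φ g), hK (φ h)]
  · push_neg at hK
    obtain ⟨t, ht⟩ := hK
    have ht1 : ((t⁻¹ : Kˣ) : K) - 1 ≠ 0 :=
      sub_ne_zero.mpr (fun hh => ht (inv_eq_one.mp (Units.val_eq_one.mp hh)))
    refine abstract_char n (eIdem Λ P α) (eIdem_sum Λ P α) (eIdem_mul Λ P α)
      (fun f i j hij => eIdem_tri Λ P α hP f i j hij) φ
      (scal K Λ P α ((t⁻¹ : Kˣ) : K)) (scal K Λ P α ((((t⁻¹ : Kˣ) : K) - 1)⁻¹))
      (scal K Λ P α (t : K))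
      (scal_central K Λ P α _) (scal_central K Λ P α _) (scal_central K Λ P α _)
      ?_ ?_ ?_ g h ?_
    · have h1 : scal K Λ P α ((t⁻¹ : Kˣ) : K) - 1
          = scal K Λ P α (((t⁻¹ : Kˣ) : K) - 1) := by
        rw [← scal_sub, scal_one]
      rw [h1, scal_mul, inv_mul_cancel₀ ht1, scal_one]
    · rw [scal_mul, Units.mul_inv, scal_one]
    · rw [scal_mul, Units.inv_mul, scal_one]
    · intro i
      apply LinearMap.ext; intro x
      simp only [Module.End.mul_apply, eIdem_apply]
      have h4 := LinearMap.congr_fun (hblocks i) (x i)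
      simp only [LinearMap.coe_comp, Function.comp_apply, LinearMap.proj_apply,
        LinearMap.single_apply] at h4
      rw [h4]
end

section
/- Let K be a field with at least 3 elements and G the group of lower unitriangular n×n matrices over a ring A (block lower triangular with identity diagonal blocks allowed). Then every element of G is a product of commutators of invertible block lower triangular matrices; consequently every group homomorphism from the block lower triangular invertible matrices to K^* is trivial on G. -/
/-! Conjugating the elementary matrix `1 + c E_ij` (`j < i`) by the diagonal matrix with `a` in
position `i` and `1` elsewhere turns `c` into `a c`, so its commutator with that diagonal matrix is
`1 + (1 - a) c E_ij`. If `a` and `1 - a` are both units (take `a = x ∈ K` with `x ≠ 0, 1`), every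
lower elementary matrix is therefore a commutator of lower triangular units. A lower unitriangular
matrix is a product of lower elementary matrices, and any homomorphism to the abelian group `Kˣ`
kills commutators. -/

/-- The group of invertible lower triangular `n × n` matrices over a ring `A`
(viewing `A` as an algebra of blocks, this is the group of invertible block lower
triangular matrices). -/
def lowerTriangularUnits (A : Type) [Ring A] (n : ℕ) :
    Subgroup (Matrix (Fin n) (Fin n) A)ˣ where
  carrier := {g : (Matrix (Fin n) (Fin n) A)ˣ |
    (∀ i j : Fin n, i < j → g.val i j = 0) ∧ (∀ i j : Fin n, i < j → g⁻¹.val i j = 0)}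
  one_mem' := by
    constructor <;> intro i j hij <;>
      simp [Matrix.one_apply_ne hij.ne]
  mul_mem' := by
    rintro a b ⟨ha, ha'⟩ ⟨hb, hb'⟩
    constructor
    · intro i j hij
      rw [Units.val_mul, Matrix.mul_apply]
      refine Finset.sum_eq_zero fun k _ => ?_
      rcases lt_or_ge i k with hk | hk
      · rw [ha i k hk, zero_mul]
      · rw [hb k j (lt_of_le_of_lt hk hij), mul_zero]
    · intro i j hij
      rw [mul_inv_rev, Units.val_mul, Matrix.mul_apply]
      refine Finset.sum_eq_zero fun k _ => ?_
      rcases lt_or_ge i k with hk | hk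
      · rw [hb' i k hk, zero_mul]
      · rw [ha' k j (lt_of_le_of_lt hk hij), mul_zero]
  inv_mem' := by
    rintro a ⟨h1, h2⟩
    refine ⟨h2, fun i j hij => ?_⟩
    rw [inv_inv]
    exact h1 i j hij

open scoped commutatorElement

namespace Matrix

variable {ι A : Type*} [DecidableEq ι] [Ring A] {i j : ι}

theorem eq_one_of_offDiag_eq_zero {α : Type*} [Zero α] [One α] {M : Matrix ι ι α}
    (hoff : ∀ k l, k ≠ l → M k l = 0) (hdiag : ∀ k, M k k = 1) : M = 1 := by
  ext k l
  rcases eq_or_ne k l with rfl | hkl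
  · rw [hdiag, one_apply_eq]
  · rw [hoff k l hkl, one_apply_ne hkl]

variable [Fintype ι]

theorem one_add_single_mul_one_add_single (h : i ≠ j) (a b : A) :
    (1 + single i j a) * (1 + single i j b) = 1 + single i j (a + b) := by
  rw [add_mul, mul_add, mul_add, single_mul_single_of_ne _ _ _ _ h.symm, single_add]
  simp only [mul_one, one_mul, add_zero]
  abel

def elementaryUnit (h : i ≠ j) (c : A) : (Matrix ι ι A)ˣ where
  val := 1 + single i j c
  inv := 1 + single i j (-c)
  val_inv := by rw [one_add_single_mul_one_add_single h, add_neg_cancel, single_zero, add_zero]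
  inv_val := by rw [one_add_single_mul_one_add_single h, neg_add_cancel, single_zero, add_zero]

theorem elementaryUnit_val (h : i ≠ j) (c : A) :
    (elementaryUnit h c).val = 1 + single i j c := rfl

theorem elementaryUnit_mul (h : i ≠ j) (a b : A) :
    elementaryUnit h a * elementaryUnit h b = elementaryUnit h (a + b) :=
  Units.ext (one_add_single_mul_one_add_single h a b)

theorem elementaryUnit_inv (h : i ≠ j) (c : A) :
    (elementaryUnit h c)⁻¹ = elementaryUnit h (-c) := Units.ext rfl

def diagonalUnit (d : ι → Aˣ) : (Matrix ι ι A)ˣ where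
  val := diagonal fun k => (d k : A)
  inv := diagonal fun k => ↑(d k)⁻¹
  val_inv := by simp [diagonal_mul_diagonal]
  inv_val := by simp [diagonal_mul_diagonal]

theorem diagonalUnit_val (d : ι → Aˣ) : (diagonalUnit d).val = diagonal fun k => (d k : A) := rfl

theorem diagonalUnit_inv_val (d : ι → Aˣ) :
    (diagonalUnit d)⁻¹.val = diagonal fun k => ↑(d k)⁻¹ := rfl

theorem diagonal_mul_single_mul_diagonal (d e : ι → A) (c : A) :
    diagonal d * single i j c * diagonal e = single i j (d i * c * e j) := by
  ext k l
  simp only [mul_diagonal, diagonal_mul, single_apply]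
  split_ifs with hkl
  · obtain ⟨rfl, rfl⟩ := hkl; rfl
  · simp

theorem diagonalUnit_conj_elementaryUnit (h : i ≠ j) (a : Aˣ) (c : A) :
    diagonalUnit (Pi.mulSingle i a) * elementaryUnit h c * (diagonalUnit (Pi.mulSingle i a))⁻¹ =
      elementaryUnit h (a * c) := by
  ext : 1
  simp only [Units.val_mul, diagonalUnit_val, diagonalUnit_inv_val, elementaryUnit_val, mul_add,
    add_mul, mul_one, diagonal_mul_single_mul_diagonal, diagonal_mul_diagonal]
  simp [Pi.mulSingle_eq_of_ne h.symm]

theorem elementaryUnit_eq_commutatorElement (h : i ≠ j) {a : Aˣ} (ha : IsUnit (1 - (a : A)))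
    (c : A) : elementaryUnit h c =
      ⁅elementaryUnit h (↑ha.unit⁻¹ * c), diagonalUnit (Pi.mulSingle i a)⁆ := by
  rw [commutatorElement_def, mul_assoc, mul_assoc, ← mul_assoc (diagonalUnit _), elementaryUnit_inv,
    diagonalUnit_conj_elementaryUnit, elementaryUnit_mul, mul_neg, ← sub_eq_add_neg, ← one_sub_mul, ← mul_assoc, ha.mul_val_inv, one_mul]

theorem mul_single_eq_single {M : Matrix ι ι A} (hM : ∀ k, M k i = (1 : Matrix ι ι A) k i)
    (c : A) : M * single i j c = single i j c := by
  ext k l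
  by_cases hl : l = j
  · subst hl
    rw [mul_single_apply_same, hM, one_apply, single_apply]
    rcases eq_or_ne k i with rfl | hk
    · simp
    · simp [hk, hk.symm]
  · rw [mul_single_apply_of_ne _ _ _ _ _ hl, single_apply_of_ne _ _ _ _ _ (by tauto)]

theorem mul_elementaryUnit_inv_apply_of_col (h : i ≠ j) {u : (Matrix ι ι A)ˣ}
    (hcol : ∀ k, u.val k i = (1 : Matrix ι ι A) k i) (k l : ι) :
    (u * (elementaryUnit h (u.val i j))⁻¹).val k l = if i = k ∧ j = l then 0 else u.val k l := by
  rw [Units.val_mul, elementaryUnit_inv, elementaryUnit_val, mul_add, mul_one,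
    mul_single_eq_single hcol, Matrix.add_apply, single_apply]
  split_ifs with hkl
  · obtain ⟨rfl, rfl⟩ := hkl
    exact add_neg_cancel _
  · exact add_zero _

end Matrix

section LowerTriangular

open Matrix

variable {A : Type} [Ring A] {n : ℕ} {i j : Fin n}

theorem one_add_single_apply_of_lt (h : j < i) (c : A) {k l : Fin n} (hkl : k < l) :
    (1 + single i j c) k l = 0 := by
  rw [Matrix.add_apply, one_apply_ne hkl.ne, zero_add,
    single_apply_of_ne _ _ _ _ _ (by rintro ⟨rfl, rfl⟩; exact lt_asymm h hkl)]

theorem elementaryUnit_mem_lowerTriangularUnits (h : j < i) (c : A) :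
    elementaryUnit h.ne' c ∈ lowerTriangularUnits A n :=
  ⟨fun _ _ => one_add_single_apply_of_lt h c, fun _ _ => one_add_single_apply_of_lt h (-c)⟩

theorem diagonalUnit_mem_lowerTriangularUnits (d : Fin n → Aˣ) :
    diagonalUnit d ∈ lowerTriangularUnits A n :=
  ⟨fun _ _ hkl => diagonal_apply_ne _ hkl.ne, fun _ _ hkl => diagonal_apply_ne _ hkl.ne⟩

theorem elementaryUnit_mem_commutator_lowerTriangularUnits {a : Aˣ} (ha : IsUnit (1 - (a : A)))
    (h : j < i) (c : A) :
    elementaryUnit h.ne' c ∈ ⁅lowerTriangularUnits A n, lowerTriangularUnits A n⁆ := by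
  rw [elementaryUnit_eq_commutatorElement h.ne' ha]
  exact Subgroup.commutator_mem_commutator (elementaryUnit_mem_lowerTriangularUnits h _)
    (diagonalUnit_mem_lowerTriangularUnits _)

theorem unitriangular_mem_of_elementaryUnit_mem {H : Subgroup (Matrix (Fin n) (Fin n) A)ˣ}
    (hH : ∀ i j : Fin n, ∀ h : j < i, ∀ c : A, elementaryUnit h.ne' c ∈ H)
    (u : (Matrix (Fin n) (Fin n) A)ˣ) (hup : ∀ i j : Fin n, i < j → u.val i j = 0)
    (hdiag : ∀ i : Fin n, u.val i i = 1) : u ∈ H := by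
  suffices ∀ s : Finset (Fin n × Fin n), ∀ u : (Matrix (Fin n) (Fin n) A)ˣ,
      (∀ i j : Fin n, i < j → u.val i j = 0) → (∀ i : Fin n, u.val i i = 1) →
      (∀ i j : Fin n, j < i → (i, j) ∉ s → u.val i j = 0) → u ∈ H from
    this Finset.univ u hup hdiag fun _ _ _ h => absurd (Finset.mem_univ _) h
  intro s
  refine Finset.induction_on_max_value Prod.fst s ?_ ?_
  · intro u hup hdiag hlow
    suffices u = 1 from this ▸ H.one_mem
    refine Units.ext (eq_one_of_offDiag_eq_zero (fun k l hkl => ?_) hdiag)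
    exact hkl.lt_or_gt.elim (hup k l) fun hlk => hlow k l hlk (Finset.notMem_empty _)
  · rintro ⟨i, j⟩ s - hmax ih u hup hdiag hlow
    by_cases hji : j < i
    swap
    · refine ih u hup hdiag fun k l hlk hks => hlow k l hlk ?_
      simp only [Finset.mem_insert, Prod.mk.injEq, not_or]
      exact ⟨fun h => hji (h.1 ▸ h.2 ▸ hlk), hks⟩
    -- Since `i` is the lowest row of `insert (i, j) s`, column `i` of `u` is that of `1`.
    have hcol : ∀ k, u.val k i = (1 : Matrix (Fin n) (Fin n) A) k i := by
      intro k
      rcases lt_trichotomy k i with hki | rfl | hik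
      · rw [hup k i hki, one_apply_ne hki.ne]
      · rw [hdiag, one_apply_eq]
      · refine (hlow k i hik ?_).trans (one_apply_ne hik.ne').symm
        simp only [Finset.mem_insert, Prod.mk.injEq, not_or]
        exact ⟨fun hki => hik.ne' hki.1, fun hks => (hmax _ hks).not_gt hik⟩
    set c := u.val i j
    set v := u * (elementaryUnit hji.ne' c)⁻¹
    have hv := mul_elementaryUnit_inv_apply_of_col hji.ne' hcol
    have hvH : v ∈ H := by
      refine ih v (fun k l hkl => ?_) (fun k => ?_) (fun k l hlk hks => ?_) <;> rw [hv]
      · rw [if_neg (by rintro ⟨rfl, rfl⟩; exact lt_asymm hji hkl), hup k l hkl]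
      · rw [if_neg (by rintro ⟨rfl, h⟩; exact hji.ne h), hdiag]
      · split_ifs with hkl
        · rfl
        · refine hlow k l hlk ?_
          simp only [Finset.mem_insert, Prod.mk.injEq, not_or]
          exact ⟨fun h => hkl ⟨h.1.symm, h.2.symm⟩, hks⟩
    simpa [v] using H.mul_mem hvH (hH i j hji c)

theorem unitriangular_mem_commutator_lowerTriangularUnits {a : Aˣ} (ha : IsUnit (1 - (a : A)))
    (u : (Matrix (Fin n) (Fin n) A)ˣ) (hup : ∀ i j : Fin n, i < j → u.val i j = 0)
    (hdiag : ∀ i : Fin n, u.val i i = 1) :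
    u ∈ ⁅lowerTriangularUnits A n, lowerTriangularUnits A n⁆ :=
  unitriangular_mem_of_elementaryUnit_mem
    (fun _ _ h => elementaryUnit_mem_commutator_lowerTriangularUnits ha h) u hup hdiag

end LowerTriangular

/-- Let `K` be a field with at least 3 elements and let `G` be the group of
lower unitriangular `n × n` matrices over a (block) `K`-algebra `A`.  Then every element
of `G` is a product of commutators of invertible lower triangular matrices (it lies in
the commutator subgroup of the group of invertible lower triangular matrices);
consequently every group homomorphism from the invertible lower triangular matrices to
`K^*` is trivial on `G`. -/
theorem unitriangular_subset_commutators
    (K : Type) [Field K] (hK : ∃ x : K, x ≠ 0 ∧ x ≠ 1)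
    (A : Type) [Ring A] [Algebra K A] (n : ℕ) :
    (∀ u : (Matrix (Fin n) (Fin n) A)ˣ,
      (∀ i j : Fin n, i < j → u.val i j = 0) →
      (∀ i : Fin n, u.val i i = 1) →
      u ∈ ⁅lowerTriangularUnits A n, lowerTriangularUnits A n⁆) ∧
    (∀ φ : lowerTriangularUnits A n →* Kˣ, ∀ u : lowerTriangularUnits A n,
      (∀ i j : Fin n, i < j → u.val.val i j = 0) →
      (∀ i : Fin n, u.val.val i i = 1) →
      φ u = 1) := by
  obtain ⟨x, hx0, hx1⟩ := hK
  have ha : IsUnit (1 - algebraMap K A x) := by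
    rw [← map_one (algebraMap K A), ← map_sub]
    exact (sub_ne_zero.2 hx1.symm).isUnit.map _
  have hU := unitriangular_mem_commutator_lowerTriangularUnits
    (n := n) (a := Units.map (algebraMap K A).toMonoidHom (Units.mk0 x hx0)) ha
  refine ⟨hU, fun φ u hup hdiag => Abelianization.commutator_subset_ker φ ?_⟩
  rw [← Subgroup.mem_map_iff_mem (Subgroup.subtype_injective _), Subgroup.map_subtype_commutator]
  exact hU u hup hdiag
end

section
/- Let Λ be a finite dimensional hereditary algebra over an infinite field K. Suppose σ is a nonzero semi-invariant on the presentation space Hom_Λ(P(γ_1), P(γ_0)) with determinantal weight β ∈ Z^n. If for each index i either the i-th coordinate of γ_0 or of γ_1 is nonzero, then β_i ≥ 0 for all i. -/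
/-- A function on a finite dimensional vector space is a polynomial (regular) function if
it is given by a multivariate polynomial in the coordinates with respect to a basis. -/
def IsPolynomialFun (K V : Type) [Field K] [AddCommGroup V] [Module K V]
    [FiniteDimensional K V] (σ : V → K) : Prop :=
  ∃ p : MvPolynomial (Fin (Module.finrank K V)) K,
    ∀ v : V, σ v = MvPolynomial.eval (fun j => (Module.finBasis K V).repr v j) p

/-- The determinantal character: the `K`-determinant of the action of a square matrix over
the division algebra `F` on `F^m` (by right multiplication), viewed as a `K`-linear map. -/
noncomputable def detChar (K : Type) [Field K] (F : Type) [DivisionRing F] [Algebra K F]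
    (m : ℕ) (g : Matrix (Fin m) (Fin m) F) : K :=
  LinearMap.det (LinearMap.restrictScalars K (Matrix.vecMulLinear g))

/-!
Fix `v` with `σ v ≠ 0` and a vertex `i` with `γ i ≠ 0` on one side, and let `e` be the idempotent
which is the identity matrix in block `i` and zero elsewhere.  For `t ≠ 0` the automorphism
`t • e + (1 - e)` has determinantal weight `(t ^ N) ^ βᵢ` with `N = γᵢ · dim_K Fᵢ > 0`, and it moves
`v` along the affine line `t ↦ t • e v + (v - e v)`.  Restricted to that line `σ` is a polynomial in
`t`, which agrees with `σ v · t ^ (N βᵢ)` for all `t ≠ 0`.  Over an infinite field a polynomial cannot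
agree with a nonzero multiple of a negative power of `t` off `0`, so `βᵢ ≥ 0`.
-/

open Polynomial

theorem Polynomial.nonneg_of_eval_eq_mul_zpow {K : Type*} [Field K] [Infinite K] (p : K[X])
    {c : K} (hc : c ≠ 0) {b : ℤ} (h : ∀ t ≠ 0, p.eval t = c * t ^ b) : 0 ≤ b := by
  by_contra! hb
  lift -b to ℕ using by omega with m hm
  have hroots : p * X ^ m - C c = 0 := by
    refine eq_zero_of_infinite_isRoot _ ((Set.finite_singleton 0).infinite_compl.mono ?_)
    intro t (ht : t ≠ 0)
    change (p * X ^ m - C c).IsRoot t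
    simp only [IsRoot, eval_sub, eval_mul, eval_pow, eval_X, eval_C]
    rw [h t ht, mul_assoc, ← zpow_natCast, hm, ← zpow_add₀ ht, add_neg_cancel, zpow_zero,
      mul_one, sub_self]
  have hm0 : m ≠ 0 := by omega
  simpa [zero_pow hm0, hc] using congrArg (eval 0) hroots

theorem IsPolynomialFun.exists_eval_eq_comp_line {K V : Type} [Field K] [AddCommGroup V]
    [Module K V] [FiniteDimensional K V] {σ : V → K} (hσ : IsPolynomialFun K V σ) (u w : V) :
    ∃ q : K[X], ∀ t : K, q.eval t = σ (t • u + w) := by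
  obtain ⟨p, hp⟩ := hσ
  let B := Module.finBasis K V
  refine ⟨MvPolynomial.eval₂ C (fun j => C (B.repr u j) * X + C (B.repr w j)) p, fun t => ?_⟩
  rw [hp, ← coe_evalRingHom, MvPolynomial.eval₂_comp_left]
  congr 1
  · exact RingHom.ext fun a => eval_C
  · funext j
    simp only [Function.comp_apply, coe_evalRingHom, eval_add, eval_mul, eval_C, eval_X,
      map_add, map_smul, Finsupp.add_apply, Finsupp.smul_apply, smul_eq_mul]
    ring

section detChar

variable (K : Type) [Field K] (F : Type) [DivisionRing F] [Algebra K F] (m : ℕ)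

theorem detChar_one : detChar K F m 1 = 1 := by
  have : (Matrix.vecMulLinear (1 : Matrix (Fin m) (Fin m) F)).restrictScalars K
      = LinearMap.id := by
    ext v i
    simp
  rw [detChar, this, LinearMap.det_id]

theorem detChar_smul_one (t : K) :
    detChar K F m (t • 1) = t ^ Module.finrank K (Fin m → F) := by
  have : (Matrix.vecMulLinear (t • 1 : Matrix (Fin m) (Fin m) F)).restrictScalars K
      = t • LinearMap.id := by
    ext v i
    simp
  rw [detChar, this, LinearMap.det_smul, LinearMap.det_id, mul_one]

end detChar

noncomputable def detWeight (K : Type) [Field K] {ι : Type*} [Fintype ι] (F : ι → Type)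
    [∀ i, DivisionRing (F i)] [∀ i, Algebra K (F i)] (γ : ι → ℕ) (β : ι → ℤ)
    (g : ∀ i, Matrix (Fin (γ i)) (Fin (γ i)) (F i)) : K :=
  ∏ i, detChar K (F i) (γ i) (g i) ^ β i

section detWeight

variable (K : Type) [Field K] {ι : Type*} [Fintype ι] (F : ι → Type)
  [∀ i, DivisionRing (F i)] [∀ i, Algebra K (F i)] (γ : ι → ℕ) (β : ι → ℤ)

theorem detWeight_one : detWeight K F γ β 1 = 1 :=
  Finset.prod_eq_one fun i _ => by rw [Pi.one_apply, detChar_one, one_zpow]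

theorem detWeight_update_smul_one [DecidableEq ι] (i : ι) (t : K) :
    detWeight K F γ β (Function.update 1 i (t • 1))
      = (t ^ Module.finrank K (Fin (γ i) → F i)) ^ β i := by
  rw [detWeight, Finset.prod_eq_single i]
  · rw [Function.update_self, detChar_smul_one]
  · intro j _ hj
    rw [Function.update_of_ne hj, Pi.one_apply, detChar_one, one_zpow]
  · exact fun h => absurd (Finset.mem_univ i) h

end detWeight

theorem nonneg_of_detWeight_semiinvariant_at {K : Type} [Field K] [Infinite K]
    {ι : Type*} [Fintype ι] [DecidableEq ι] {F : ι → Type}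
    [∀ i, DivisionRing (F i)] [∀ i, Algebra K (F i)] [∀ i, FiniteDimensional K (F i)]
    {γ : ι → ℕ} {β : ι → ℤ} {V : Type} [AddCommGroup V] [Module K V] [FiniteDimensional K V]
    (ρ : (∀ i, Matrix (Fin (γ i)) (Fin (γ i)) (F i)) →ₐ[K] Module.End K V)
    {σ : V → K} (hpoly : IsPolynomialFun K V σ) {v : V} (hv : σ v ≠ 0)
    (hsemi : ∀ g : ∀ i, Matrix (Fin (γ i)) (Fin (γ i)) (F i), (∀ i, IsUnit (g i)) →
      σ (ρ g v) = σ v * detWeight K F γ β g)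
    {i : ι} (hγ : γ i ≠ 0) : 0 ≤ β i := by
  have : NeZero (γ i) := ⟨hγ⟩
  set N := Module.finrank K (Fin (γ i) → F i)
  have hN : 0 < N := Module.finrank_pos
  set e : ∀ j, Matrix (Fin (γ j)) (Fin (γ j)) (F j) := Pi.single i 1
  obtain ⟨q, hq⟩ := hpoly.exists_eval_eq_comp_line (ρ e v) (v - ρ e v)
  suffices 0 ≤ (N : ℤ) * β i from (mul_nonneg_iff_of_pos_left (by exact_mod_cast hN)).mp this
  refine q.nonneg_of_eval_eq_mul_zpow hv fun t ht => ?_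
  set g : ∀ j, Matrix (Fin (γ j)) (Fin (γ j)) (F j) := Function.update 1 i (t • 1)
  have hg : g = t • e + (1 - e) := by
    funext j
    obtain rfl | hj := eq_or_ne j i
    · simp [g, e]
    · simp [g, e, hj]
  have hunit : ∀ j, IsUnit (g j) := by
    intro j
    obtain rfl | hj := eq_or_ne j i
    · rw [show g j = t • 1 from Function.update_self .., ← Algebra.algebraMap_eq_smul_one]
      exact (IsUnit.mk0 t ht).map _
    · rw [show g j = 1 from Function.update_of_ne hj ..]
      exact isUnit_one
  have := hsemi g hunit
  rw [detWeight_update_smul_one, hg] at this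
  rw [hq, zpow_mul, zpow_natCast, ← this]
  simp [sub_eq_add_neg]

theorem det_weight_nonneg_general
    (K : Type) [Field K] [Infinite K] (n : ℕ)
    (F : Fin n → Type) [∀ i, DivisionRing (F i)] [∀ i, Algebra K (F i)]
    [∀ i, FiniteDimensional K (F i)]
    (γ₀ γ₁ : Fin n → ℕ) (β : Fin n → ℤ)
    (V : Type) [AddCommGroup V] [Module K V] [FiniteDimensional K V]
    (ρ₀ : (∀ i, Matrix (Fin (γ₀ i)) (Fin (γ₀ i)) (F i)) →ₐ[K] Module.End K V)
    (ρ₁ : (∀ i, Matrix (Fin (γ₁ i)) (Fin (γ₁ i)) (F i)) →ₐ[K] Module.End K V)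
    (σ : V → K) (hpoly : IsPolynomialFun K V σ) (hσ : σ ≠ 0)
    (hsemi : ∀ (g₀ : ∀ i, Matrix (Fin (γ₀ i)) (Fin (γ₀ i)) (F i)), (∀ i, IsUnit (g₀ i)) →
      ∀ (g₁ : ∀ i, Matrix (Fin (γ₁ i)) (Fin (γ₁ i)) (F i)), (∀ i, IsUnit (g₁ i)) →
      ∀ v : V, σ (ρ₀ g₀ (ρ₁ g₁ v))
        = σ v * (∏ i, detChar K (F i) (γ₀ i) (g₀ i) ^ β i)
            * ∏ i, detChar K (F i) (γ₁ i) (g₁ i) ^ β i)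
    (hne : ∀ i, γ₀ i ≠ 0 ∨ γ₁ i ≠ 0) :
    ∀ i, 0 ≤ β i := by
  intro i
  obtain ⟨v, hv⟩ := Function.ne_iff.mp hσ
  rcases hne i with h₀ | h₁
  · refine nonneg_of_detWeight_semiinvariant_at ρ₀ hpoly hv (fun g hg => ?_) h₀
    have := hsemi g hg 1 (fun _ => isUnit_one) v
    rwa [map_one, Module.End.one_apply, ← detWeight, ← detWeight, detWeight_one, mul_one] at this
  · refine nonneg_of_detWeight_semiinvariant_at ρ₁ hpoly hv (fun g hg => ?_) h₁
    have := hsemi 1 (fun _ => isUnit_one) g hg v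
    rwa [map_one, Module.End.one_apply, ← detWeight, ← detWeight, detWeight_one, mul_one] at this

/-- Let `Λ` be a finite dimensional hereditary algebra over an infinite field
`K`.  A presentation space `Hom_Λ(P(γ₁), P(γ₀))` is a finite dimensional `K`-vector space
`V` with two commuting actions of the algebras `End_Λ(P(γ_s)) ≅ ∏ᵢ M_{γ_s(i)}(F i)`
(`F i = End_Λ(P_i)` the division algebras of the vertices).  Suppose `σ` is a nonzero
polynomial semi-invariant on `V` of determinantal weight `β ∈ ℤⁿ`, i.e.
`σ(g₀ · f · g₁) = σ(f) ∏ᵢ χᵢ(g₀)^{βᵢ} χᵢ(g₁)^{βᵢ}` for all automorphisms `g₀, g₁`, where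
`χᵢ` is the `K`-determinant character on the `GL(·, F i)`-block.  If for each index `i`
either the `i`-th coordinate of `γ₀` or of `γ₁` is nonzero, then `βᵢ ≥ 0` for all `i`. -/
theorem det_weight_nonneg
    (K : Type) [Field K] [Infinite K] (n : ℕ)
    (F : Fin n → Type) [∀ i, DivisionRing (F i)] [∀ i, Algebra K (F i)]
    [∀ i, FiniteDimensional K (F i)]
    (γ₀ γ₁ : Fin n → ℕ) (β : Fin n → ℤ)
    (V : Type) [AddCommGroup V] [Module K V] [FiniteDimensional K V]
    (ρ₀ : (∀ i, Matrix (Fin (γ₀ i)) (Fin (γ₀ i)) (F i)) →ₐ[K] Module.End K V)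
    (ρ₁ : (∀ i, Matrix (Fin (γ₁ i)) (Fin (γ₁ i)) (F i)) →ₐ[K] Module.End K V)
    (hcomm : ∀ a b, Commute (ρ₀ a) (ρ₁ b))
    (σ : V → K) (hpoly : IsPolynomialFun K V σ) (hσ : σ ≠ 0)
    (hsemi : ∀ (g₀ : ∀ i, Matrix (Fin (γ₀ i)) (Fin (γ₀ i)) (F i)), (∀ i, IsUnit (g₀ i)) →
      ∀ (g₁ : ∀ i, Matrix (Fin (γ₁ i)) (Fin (γ₁ i)) (F i)), (∀ i, IsUnit (g₁ i)) →
      ∀ v : V, σ (ρ₀ g₀ (ρ₁ g₁ v))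
        = σ v * (∏ i, detChar K (F i) (γ₀ i) (g₀ i) ^ β i)
            * ∏ i, detChar K (F i) (γ₁ i) (g₁ i) ^ β i)
    (hne : ∀ i, γ₀ i ≠ 0 ∨ γ₁ i ≠ 0) :
    ∀ i, 0 ≤ β i :=
  det_weight_nonneg_general K n F γ₀ γ₁ β V ρ₀ ρ₁ σ hpoly hσ hsemi hne
end

section
/- Let Λ be a finite dimensional hereditary algebra over an infinite field and let M be a rigid Λ-module (Ext^1_Λ(M,M) = 0) with projective presentation 0 → P → P' → M → 0. Then the set of all f ∈ Hom_Λ(P, P') with coker(f) ≅ M is a nonempty Zariski open subset of the affine space Hom_Λ(P, P'). -/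
/-!
By rigidity, whenever `coker f ≅ M` every map `P → M` extends along `f`: precomposition with `f`,
`Hom(P', M) → Hom(P, M)`, is surjective. A dimension count shows that `coker f ≅ M` iff `f` is
injective and some surjection `φ : P' → M` kills `f`. If `B` is the matrix of precomposition and
`det (B Y) ≠ 0`, the kernel of `B` is the image of `det (B Y) • 1 - Y adj (B Y) B`, which
parametrizes the candidates `φ` polynomially in `f` and auxiliary variables. With `A`, `Φ` the
matrices of `f`, `φ`, injectivity of `f` and surjectivity of `φ` read `det (U A) ≠ 0` and
`det (Φ S) ≠ 0` for some `U`, `S`. Hence the locus is the projection of the nonvanishing locus of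
one polynomial in `f` and the auxiliary variables, and over an infinite field this projection is
the union of the nonvanishing loci of its coefficients.
-/

open Module

section PolynomialFunctions

open MvPolynomial

variable (K V : Type) [Field K] [AddCommGroup V] [Module K V] [FiniteDimensional K V]

noncomputable def polyFunSubalgebra : Subalgebra K (V → K) :=
  (aeval fun j (v : V) => (finBasis K V).repr v j).range

variable {V} in
def IsZariskiOpen (S : Set V) : Prop :=
  ∃ (m : ℕ) (g : Fin m → V → K), (∀ j, IsPolynomialFun K V (g j)) ∧ S = {v | ∃ j, g j v ≠ 0}

variable {K V}

namespace polyFunSubalgebra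

noncomputable def evalAt (v : V) : polyFunSubalgebra K V →ₐ[K] K :=
  (Pi.evalAlgHom K (fun _ => K) v).comp (polyFunSubalgebra K V).val

theorem isPolynomialFun {σ : V → K} (hσ : σ ∈ polyFunSubalgebra K V) :
    IsPolynomialFun K V σ := by
  obtain ⟨p, rfl⟩ := hσ
  refine ⟨p, fun v => ?_⟩
  change Pi.evalAlgHom K (fun _ => K) v (aeval _ p) = _
  rw [comp_aeval_apply]
  rfl

theorem coe_linearMap_mem (g : V →ₗ[K] K) : ⇑g ∈ polyFunSubalgebra K V := by
  have hg : ⇑g = ∑ j, g (finBasis K V j) • fun v => (finBasis K V).repr v j := by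
    funext v
    rw [Finset.sum_apply]
    conv_lhs => rw [← (finBasis K V).sum_repr v]
    simp only [map_sum, map_smul, Pi.smul_apply, smul_eq_mul, mul_comm]
  rw [hg]
  exact Subalgebra.sum_mem _ fun j _ =>
    Subalgebra.smul_mem _ ((AlgHom.mem_range _).2 ⟨X j, by simp⟩) _

noncomputable def matrixOfLinear {m n : Type*} (L : V →ₗ[K] Matrix m n K) :
    Matrix m n (polyFunSubalgebra K V) :=
  Matrix.of fun i j => ⟨fun v => L v i j, coe_linearMap_mem (Matrix.entryLinearMap K K i j ∘ₗ L)⟩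

theorem map_evalAt_matrixOfLinear {m n : Type*} (L : V →ₗ[K] Matrix m n K) (v : V) :
    (matrixOfLinear L).map (evalAt v) = L v :=
  rfl

end polyFunSubalgebra

open polyFunSubalgebra in
theorem isZariskiOpen_setOf_exists_eval₂_ne_zero [Infinite K] {ι : Type*}
    (q : MvPolynomial ι (polyFunSubalgebra K V)) :
    IsZariskiOpen K {v : V | ∃ a, eval₂Hom (evalAt v).toRingHom a q ≠ 0} := by
  classical
  refine ⟨_, fun j => (q.coeff (q.support.equivFin.symm j)).1,
    fun j => isPolynomialFun (q.coeff _).2, ?_⟩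
  ext v
  have hfunext : (∃ a, eval₂Hom (evalAt v).toRingHom a q ≠ 0) ↔
      map (evalAt v).toRingHom q ≠ 0 := by
    simp [MvPolynomial.funext_iff, eval_map]
  simp only [Set.mem_ofPred_eq, hfunext, ne_zero_iff, coeff_map]
  constructor
  · rintro ⟨d, hd⟩
    have hmem : d ∈ q.support := mem_support_iff.2 fun h => hd (by rw [h, map_zero])
    exact ⟨q.support.equivFin ⟨d, hmem⟩, by simpa [evalAt] using hd⟩
  · rintro ⟨j, hj⟩
    exact ⟨_, hj⟩

end PolynomialFunctions

section BaseChangeMatrix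

variable {K R : Type*} [Field K] [CommSemiring R] [Algebra K R] {n m m' : Type*} [Fintype n]
  [DecidableEq n]

noncomputable def LinearMap.baseChangeMatrix (L : (n → K) →ₗ[K] Matrix m m' K) (c : n → R) :
    Matrix m m' R :=
  ∑ r, c r • (L (Pi.single r 1)).map (algebraMap K R)

theorem LinearMap.map_baseChangeMatrix (L : (n → K) →ₗ[K] Matrix m m' K) (ψ : R →+* K)
    (hψ : ∀ k, ψ (algebraMap K R k) = k) (c : n → R) :
    (L.baseChangeMatrix c).map ψ = L (ψ ∘ c) := by
  have hc : ψ ∘ c = ∑ r, ψ (c r) • Pi.single r 1 := by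
    ext r
    simp [Pi.single_apply]
  ext i j
  simp [hc, baseChangeMatrix, Matrix.sum_apply, map_sum, hψ]

end BaseChangeMatrix

section LinearAlgebra

variable {K E F : Type*} [Field K] [AddCommGroup E] [Module K E] [AddCommGroup F] [Module K F]
  {m n : Type*} [Fintype m] [DecidableEq m] [Fintype n] [DecidableEq n]

theorem LinearMap.surjective_iff_exists_det_toMatrix_mul_ne_zero (b : Basis m K E)
    (c : Basis n K F) (g : E →ₗ[K] F) :
    Function.Surjective g ↔ ∃ B : Matrix m n K, (toMatrix b c g * B).det ≠ 0 := by
  constructor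
  · intro hg
    obtain ⟨h, hh⟩ := g.exists_rightInverse_of_surjective (range_eq_top.2 hg)
    exact ⟨toMatrix c b h, by simp [← toMatrix_comp, hh]⟩
  · rintro ⟨B, hB⟩
    have := Module.Finite.of_basis b
    have := Module.Finite.of_basis c
    have hunit : IsUnit (g ∘ₗ Matrix.toLin c b B) := by
      rw [isUnit_iff_isUnit_det, ← det_toMatrix c, toMatrix_comp c b c, toMatrix_toLin]
      exact isUnit_iff_ne_zero.2 hB
    have hsurj := ((Module.End.isUnit_iff _).1 hunit).2
    rw [coe_comp] at hsurj
    exact hsurj.of_comp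

theorem LinearMap.injective_iff_exists_det_mul_toMatrix_ne_zero (b : Basis m K E)
    (c : Basis n K F) (g : E →ₗ[K] F) :
    Function.Injective g ↔ ∃ B : Matrix m n K, (B * toMatrix b c g).det ≠ 0 := by
  constructor
  · intro hg
    obtain ⟨h, hh⟩ := g.exists_leftInverse_of_injective (ker_eq_bot.2 hg)
    exact ⟨toMatrix c b h, by simp [← toMatrix_comp, hh]⟩
  · rintro ⟨B, hB⟩
    have := Module.Finite.of_basis b
    have := Module.Finite.of_basis c
    have hunit : IsUnit (Matrix.toLin c b B ∘ₗ g) := by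
      rw [isUnit_iff_isUnit_det, ← det_toMatrix b, toMatrix_comp b c b, toMatrix_toLin]
      exact isUnit_iff_ne_zero.2 hB
    have hinj := ((Module.End.isUnit_iff _).1 hunit).1
    rw [coe_comp] at hinj
    exact hinj.of_comp

end LinearAlgebra

namespace Matrix

variable {R S : Type*} [CommRing R] [CommRing S]
  {m n : Type*} [Fintype m] [DecidableEq m] [Fintype n] [DecidableEq n]

/-- When `A * B` is invertible, this is `det (A * B)` times the projection onto the kernel of `A`
along the range of `B`; the scaling keeps the entries polynomial in those of `A` and `B`. -/
noncomputable def scaledKerProj (A : Matrix m n R) (B : Matrix n m R) : Matrix n n R :=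
  (A * B).det • 1 - B * (A * B).adjugate * A

theorem mul_scaledKerProj (A : Matrix m n R) (B : Matrix n m R) : A * scaledKerProj A B = 0 := by
  rw [scaledKerProj, Matrix.mul_sub, ← Matrix.mul_assoc, ← Matrix.mul_assoc, mul_adjugate]
  simp

theorem scaledKerProj_mulVec_of_mulVec_eq_zero {A : Matrix m n R} (B : Matrix n m R)
    {u : n → R} (hu : A *ᵥ u = 0) : scaledKerProj A B *ᵥ u = (A * B).det • u := by
  simp [scaledKerProj, sub_mulVec, smul_mulVec, ← mulVec_mulVec, hu]

theorem map_scaledKerProj (f : R →+* S) (A : Matrix m n R) (B : Matrix n m R) :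
    (scaledKerProj A B).map f = scaledKerProj (A.map f) (B.map f) := by
  have hdet : f (A * B).det = (A.map f * B.map f).det := by
    rw [RingHom.map_det, RingHom.mapMatrix_apply, Matrix.map_mul]
  have hadj : (A * B).adjugate.map f = (A.map f * B.map f).adjugate := by
    rw [← Matrix.map_mul]
    exact RingHom.map_adjugate f _
  simp only [scaledKerProj, Matrix.map_sub f (map_sub f), Matrix.map_mul, hadj, ← hdet]
  ext i j
  simp [Matrix.one_apply, apply_ite f]

end Matrix

section ShortExact

open LinearMap

variable {K E F G : Type*} [Field K] [AddCommGroup E] [Module K E] [AddCommGroup F] [Module K F]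
  [AddCommGroup G] [Module K G] [FiniteDimensional K F] {f : E →ₗ[K] F} {g : F →ₗ[K] G}

theorem finrank_add_finrank_eq_of_exact (hf : Function.Injective f) (hg : Function.Surjective g)
    (hfg : Function.Exact f g) : finrank K E + finrank K G = finrank K F := by
  have := g.finrank_range_add_finrank_ker
  rw [range_eq_top.2 hg, finrank_top, exact_iff.1 hfg, finrank_range_of_inj hf] at this
  omega

theorem injective_iff_exact_of_finrank_add_finrank_eq [FiniteDimensional K E]
    (hg : Function.Surjective g) (hgf : g ∘ₗ f = 0) (hdim : finrank K E + finrank K G = finrank K F) :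
    Function.Injective f ↔ Function.Exact f g := by
  have hker : finrank K (ker g) = finrank K E := by
    have := g.finrank_range_add_finrank_ker
    rw [range_eq_top.2 hg, finrank_top] at this
    omega
  have hle : range f ≤ ker g := range_le_ker_iff.2 hgf
  rw [exact_iff]
  refine ⟨fun hf => (Submodule.eq_of_le_of_finrank_eq hle ?_).symm, fun h => ?_⟩
  · rw [finrank_range_of_inj hf, hker]
  · have := f.finrank_range_add_finrank_ker
    rw [← h, hker] at this
    exact ker_eq_bot.1 (Submodule.finrank_eq_zero.1 (by omega))

end ShortExact

section Cokernel

open LinearMap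

variable {Λ M P P' : Type*} [Ring Λ] [AddCommGroup M] [Module Λ M] [AddCommGroup P] [Module Λ P]
  [AddCommGroup P'] [Module Λ P']

theorem nonempty_quotient_range_equiv_iff_exists_exact (f : P →ₗ[Λ] P') :
    Nonempty ((P' ⧸ range f) ≃ₗ[Λ] M) ↔
      ∃ φ : P' →ₗ[Λ] M, Function.Surjective φ ∧ Function.Exact f φ := by
  constructor
  · rintro ⟨e⟩
    refine ⟨e.toLinearMap ∘ₗ (range f).mkQ, e.surjective.comp (range f).mkQ_surjective, ?_⟩
    rw [exact_iff, ker_comp, LinearEquiv.ker, Submodule.comap_bot, Submodule.ker_mkQ]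
  · rintro ⟨φ, hφ, hexact⟩
    exact ⟨(Submodule.quotEquivOfEq _ _ (exact_iff.1 hexact).symm).trans
      (φ.quotKerEquivOfSurjective hφ)⟩

end Cokernel

section Rigid

open LinearMap

variable {Λ M N P P' : Type} [Ring Λ] [AddCommGroup M] [Module Λ M] [AddCommGroup N] [Module Λ N]
  [AddCommGroup P] [Module Λ P] [AddCommGroup P'] [Module Λ P']

/-- Push the sequence `0 → P → P' → M → 0` out along `h`; the pushout sequence
`0 → N → E → M → 0` splits, and a retraction of `N → E` restricts to the extension of `h`. -/
theorem ExtOneVanish.exists_comp_eq (hext : ExtOneVanish Λ M N) {f : P →ₗ[Λ] P'}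
    {φ : P' →ₗ[Λ] M} (hf : Function.Injective f) (hφ : Function.Surjective φ)
    (hfφ : Function.Exact f φ) (h : P →ₗ[Λ] N) : ∃ g : P' →ₗ[Λ] N, g ∘ₗ f = h := by
  set R := range (h.prod (-f))
  have hR : R ≤ ker (φ ∘ₗ snd Λ N P') := by
    rintro _ ⟨x, rfl⟩
    simp [hfφ.apply_apply_eq_zero]
  set i := R.mkQ ∘ₗ inl Λ N P'
  set p := R.liftQ _ hR
  have hi : Function.Injective i := by
    rw [injective_iff_map_eq_zero]
    intro n hn
    obtain ⟨x, hx⟩ := (Submodule.Quotient.mk_eq_zero R).1 hn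
    have hx' : h x = n ∧ f x = 0 := by simpa [Prod.ext_iff] using hx
    rw [← hx'.1, (injective_iff_map_eq_zero f).1 hf x hx'.2, map_zero]
  have hp : Function.Surjective p := by
    intro m
    obtain ⟨y, rfl⟩ := hφ m
    exact ⟨R.mkQ (0, y), rfl⟩
  have hip : Function.Exact i p := by
    intro e
    obtain ⟨⟨n, y⟩, rfl⟩ := R.mkQ_surjective e
    change φ y = 0 ↔ _
    constructor
    · intro hy
      obtain ⟨x, rfl⟩ := (hfφ y).1 hy
      refine ⟨n + h x, (Submodule.Quotient.eq R).2 ⟨x, ?_⟩⟩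
      simp
    · rintro ⟨n', hn'⟩
      simpa [i, p] using (congrArg p hn').symm
  obtain ⟨s, hs⟩ := hext _ _ _ i p hi hp (exact_iff.1 hip).symm
  have hsplit := (hip.split_tfae hi hp).out 0 1
  obtain ⟨l, hl⟩ := hsplit.1 ⟨s, hs⟩
  refine ⟨l ∘ₗ R.mkQ ∘ₗ inr Λ N P', LinearMap.ext fun x => ?_⟩
  have hx : R.mkQ (0, f x) = R.mkQ (h x, 0) := by
    rw [Submodule.mkQ_apply, Submodule.mkQ_apply, Submodule.Quotient.eq]
    exact ⟨-x, by simp⟩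
  exact (congrArg l hx).trans (LinearMap.congr_fun hl (h x))

end Rigid

section Presentation

noncomputable def homMatrixₗ (K : Type) {Λ : Type} (X Y : Type) [Field K] [Ring Λ] [Algebra K Λ]
    [AddCommGroup X] [Module Λ X] [Module K X] [IsScalarTower K Λ X] [FiniteDimensional K X]
    [AddCommGroup Y] [Module Λ Y] [Module K Y] [IsScalarTower K Λ Y] [FiniteDimensional K Y] :
    (X →ₗ[Λ] Y) →ₗ[K] Matrix (Fin (finrank K Y)) (Fin (finrank K X)) K :=
  (LinearMap.toMatrix (finBasis K X) (finBasis K Y)).toLinearMap ∘ₗ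
    LinearMap.restrictScalarsₗ K Λ X Y K

open LinearMap Matrix

variable (K : Type) {Λ M P P' : Type} [Field K] [Ring Λ] [Algebra K Λ]
  [AddCommGroup M] [Module Λ M] [Module K M] [IsScalarTower K Λ M] [FiniteDimensional K M]
  [AddCommGroup P] [Module Λ P] [Module K P] [IsScalarTower K Λ P] [FiniteDimensional K P]
  [AddCommGroup P'] [Module Λ P'] [Module K P'] [IsScalarTower K Λ P'] [FiniteDimensional K P']

variable (M) in
noncomputable def precompₗ : (P →ₗ[Λ] P') →ₗ[K] (P' →ₗ[Λ] M) →ₗ[K] (P →ₗ[Λ] M) :=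
  LinearMap.mk₂ K (fun f φ => φ ∘ₗ f) (fun _ _ _ => comp_add _ _ _)
    (fun _ _ _ => by ext; simp) (fun _ _ _ => add_comp _ _ _) (fun _ _ _ => smul_comp _ _ _)

variable (M) in
noncomputable def precompMatrixₗ : (P →ₗ[Λ] P') →ₗ[K]
    Matrix (Fin (finrank K (P →ₗ[Λ] M))) (Fin (finrank K (P' →ₗ[Λ] M))) K :=
  (toMatrix (finBasis K _) (finBasis K _)).toLinearMap ∘ₗ precompₗ K M

variable (M) in
noncomputable def kerHom (f : P →ₗ[Λ] P')
    (Y : Matrix (Fin (finrank K (P' →ₗ[Λ] M))) (Fin (finrank K (P →ₗ[Λ] M))) K)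
    (t : Fin (finrank K (P' →ₗ[Λ] M)) → K) : P' →ₗ[Λ] M :=
  (finBasis K (P' →ₗ[Λ] M)).equivFun.symm (scaledKerProj (precompMatrixₗ K M f) Y *ᵥ t)

theorem precompMatrixₗ_mulVec_repr (f : P →ₗ[Λ] P') (φ : P' →ₗ[Λ] M) :
    precompMatrixₗ K M f *ᵥ (finBasis K _).repr φ = (finBasis K _).repr (φ ∘ₗ f) :=
  toMatrix_mulVec_repr _ _ _ φ

theorem kerHom_comp (f : P →ₗ[Λ] P')
    (Y : Matrix (Fin (finrank K (P' →ₗ[Λ] M))) (Fin (finrank K (P →ₗ[Λ] M))) K)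
    (t : Fin (finrank K (P' →ₗ[Λ] M)) → K) : kerHom K M f Y t ∘ₗ f = 0 := by
  have h := precompMatrixₗ_mulVec_repr K f (kerHom K M f Y t)
  rw [kerHom, ← Basis.equivFun_apply, LinearEquiv.apply_symm_apply, mulVec_mulVec,
    mul_scaledKerProj, zero_mulVec] at h
  exact (finBasis K _).repr.map_eq_zero_iff.1 (DFunLike.coe_injective h.symm)

theorem exists_kerHom_eq {f : P →ₗ[Λ] P'}
    {Y : Matrix (Fin (finrank K (P' →ₗ[Λ] M))) (Fin (finrank K (P →ₗ[Λ] M))) K}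
    (hY : (precompMatrixₗ K M f * Y).det ≠ 0) {φ : P' →ₗ[Λ] M} (hφ : φ ∘ₗ f = 0) :
    ∃ t, kerHom K M f Y t = φ := by
  have hker : precompMatrixₗ K M f *ᵥ (finBasis K _).repr φ = 0 := by
    rw [precompMatrixₗ_mulVec_repr, hφ, map_zero]
    rfl
  refine ⟨(precompMatrixₗ K M f * Y).det⁻¹ • (finBasis K _).repr φ, ?_⟩
  rw [kerHom, mulVec_smul, scaledKerProj_mulVec_of_mulVec_eq_zero Y hker, smul_smul,
    inv_mul_cancel₀ hY, one_smul, ← Basis.equivFun_apply, LinearEquiv.symm_apply_apply]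

theorem nonempty_quotient_range_equiv_iff_exists_det_ne_zero (hrigid : ExtOneVanish Λ M M)
    (hdim : finrank K P + finrank K M = finrank K P') (f : P →ₗ[Λ] P') :
    Nonempty ((P' ⧸ range f) ≃ₗ[Λ] M) ↔
      ∃ (U : Matrix _ _ K) (Y : Matrix _ _ K) (t : _ → K) (S : Matrix _ _ K),
        (U * homMatrixₗ K P P' f).det ≠ 0 ∧ (homMatrixₗ K P' M (kerHom K M f Y t) * S).det ≠ 0 := by
  have exact_iff_injective {φ : P' →ₗ[Λ] M} (hφ : Function.Surjective φ) (hφf : φ ∘ₗ f = 0) :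
      Function.Exact f φ ↔ Function.Injective f :=
    (injective_iff_exact_of_finrank_add_finrank_eq (f := f.restrictScalars K)
      (g := φ.restrictScalars K) hφ (congrArg (restrictScalars K) hφf) hdim).symm
  rw [nonempty_quotient_range_equiv_iff_exists_exact]
  constructor
  · rintro ⟨φ, hφ, hexact⟩
    have hf := (exact_iff_injective hφ hexact.linearMap_comp_eq_zero).1 hexact
    obtain ⟨U, hU⟩ := (injective_iff_exists_det_mul_toMatrix_ne_zero (finBasis K P)
      (finBasis K P') (f.restrictScalars K)).1 hf
    obtain ⟨Y, hY⟩ := (surjective_iff_exists_det_toMatrix_mul_ne_zero (finBasis K _)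
      (finBasis K _) (precompₗ K M f)).1
      fun h => hrigid.exists_comp_eq hf hφ hexact h
    obtain ⟨t, rfl⟩ := exists_kerHom_eq K hY hexact.linearMap_comp_eq_zero
    obtain ⟨S, hS⟩ := (surjective_iff_exists_det_toMatrix_mul_ne_zero (finBasis K P')
      (finBasis K M) ((kerHom K M f Y t).restrictScalars K)).1 hφ
    exact ⟨U, Y, t, S, hU, hS⟩
  · rintro ⟨U, Y, t, S, hU, hS⟩
    have hf := (injective_iff_exists_det_mul_toMatrix_ne_zero (finBasis K P) (finBasis K P')
      (f.restrictScalars K)).2 ⟨U, hU⟩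
    have hφ := (surjective_iff_exists_det_toMatrix_mul_ne_zero (finBasis K P') (finBasis K M)
      ((kerHom K M f Y t).restrictScalars K)).2 ⟨S, hS⟩
    exact ⟨kerHom K M f Y t, hφ, (exact_iff_injective hφ (kerHom_comp K f Y t)).2 hf⟩

variable (Λ M P P') in
abbrev CokerParams : Type :=
  (Fin (finrank K P) × Fin (finrank K P')) ⊕
    (Fin (finrank K (P' →ₗ[Λ] M)) × Fin (finrank K (P →ₗ[Λ] M))) ⊕
      Fin (finrank K (P' →ₗ[Λ] M)) ⊕ (Fin (finrank K P') × Fin (finrank K M))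

section Blocks

variable {α : Type*} (a : CokerParams K Λ M P P' → α)

def CokerParams.U : Matrix (Fin (finrank K P)) (Fin (finrank K P')) α :=
  of fun i k => a (.inl (i, k))

def CokerParams.Y : Matrix (Fin (finrank K (P' →ₗ[Λ] M))) (Fin (finrank K (P →ₗ[Λ] M))) α :=
  of fun r l => a (.inr (.inl (r, l)))

def CokerParams.t : Fin (finrank K (P' →ₗ[Λ] M)) → α :=
  fun r => a (.inr (.inr (.inl r)))

def CokerParams.S : Matrix (Fin (finrank K P')) (Fin (finrank K M)) α :=
  of fun k x => a (.inr (.inr (.inr (k, x))))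

end Blocks

open MvPolynomial polyFunSubalgebra

variable (Λ M P P') in
noncomputable def cokerPoly :
    MvPolynomial (CokerParams K Λ M P P') (polyFunSubalgebra K (P →ₗ[Λ] P')) :=
  let Xs : CokerParams K Λ M P P' →
    MvPolynomial (CokerParams K Λ M P P') (polyFunSubalgebra K (P →ₗ[Λ] P')) := X
  let A : Matrix _ _ (MvPolynomial (CokerParams K Λ M P P') (polyFunSubalgebra K (P →ₗ[Λ] P'))) :=
    (matrixOfLinear (homMatrixₗ K P P')).map C
  let B : Matrix _ _ (MvPolynomial (CokerParams K Λ M P P') (polyFunSubalgebra K (P →ₗ[Λ] P'))) :=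
    (matrixOfLinear (precompMatrixₗ K M)).map C
  let Φ := (homMatrixₗ K P' M ∘ₗ (finBasis K _).equivFun.symm.toLinearMap).baseChangeMatrix
    (scaledKerProj B (CokerParams.Y K Xs) *ᵥ CokerParams.t K Xs)
  (CokerParams.U K Xs * A).det * (Φ * CokerParams.S K Xs).det

theorem eval₂Hom_cokerPoly (f : P →ₗ[Λ] P')
    (a : CokerParams K Λ M P P' → K) :
    eval₂Hom (evalAt f).toRingHom a (cokerPoly K Λ M P P') =
      (CokerParams.U K a * homMatrixₗ K P P' f).det *
        (homMatrixₗ K P' M (kerHom K M f (CokerParams.Y K a) (CokerParams.t K a)) *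
          CokerParams.S K a).det := by
  set ψ := eval₂Hom (evalAt f).toRingHom a
  have hψC : ψ.comp C = (evalAt f).toRingHom := by ext; simp [ψ]
  have hψX : ψ ∘ X = a := funext fun _ => eval₂Hom_X' _ _ _
  have hψalg : ∀ k, ψ (algebraMap K _ k) = k := fun k => by
    simp [ψ, MvPolynomial.algebraMap_apply]
  have hmapC : ∀ {m n : Type} (L : Matrix m n (polyFunSubalgebra K (P →ₗ[Λ] P'))),
      (L.map C).map ψ = L.map (evalAt f) := fun L => by
    rw [Matrix.map_map, ← RingHom.coe_comp, hψC]
    rfl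
  have hmulVec : ∀ {m n : Type} [Fintype n] (N : Matrix m n _) (v : n → _),
      ψ ∘ (N *ᵥ v) = N.map ψ *ᵥ (ψ ∘ v) := fun N v => funext (RingHom.map_mulVec ψ N v)
  have hdet : ∀ {n : Type} [Fintype n] [DecidableEq n] (N : Matrix n n _),
      ψ N.det = (N.map ψ).det := fun N => RingHom.map_det ψ N
  simp only [cokerPoly, map_mul, hdet]
  rw [Matrix.map_mul, Matrix.map_mul, map_baseChangeMatrix _ ψ hψalg,
    hmulVec, map_scaledKerProj, hmapC, hmapC, map_evalAt_matrixOfLinear,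
    map_evalAt_matrixOfLinear, ← hψX]
  rfl

theorem setOf_nonempty_quotient_range_equiv_eq (hrigid : ExtOneVanish Λ M M)
    (hdim : finrank K P + finrank K M = finrank K P') :
    {f : P →ₗ[Λ] P' | Nonempty ((P' ⧸ range f) ≃ₗ[Λ] M)} =
      {f | ∃ a, eval₂Hom (evalAt f).toRingHom a (cokerPoly K Λ M P P') ≠ 0} := by
  ext f
  simp only [Set.mem_ofPred_eq, nonempty_quotient_range_equiv_iff_exists_det_ne_zero K hrigid hdim,
    eval₂Hom_cokerPoly, mul_ne_zero_iff]
  constructor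
  · rintro ⟨U, Y, t, S, h⟩
    exact ⟨Sum.elim (fun p => U p.1 p.2) (Sum.elim (fun p => Y p.1 p.2)
      (Sum.elim t fun p => S p.1 p.2)), h⟩
  · rintro ⟨a, h⟩
    exact ⟨_, _, _, _, h⟩

end Presentation

theorem coker_iso_rigid_is_open_dense_general
    (K : Type) [Field K] [Infinite K]
    (Λ : Type) [Ring Λ] [Algebra K Λ]
    (M P P' : Type)
    [AddCommGroup M] [Module Λ M] [Module K M] [IsScalarTower K Λ M]
    [FiniteDimensional K M]
    [AddCommGroup P] [Module Λ P] [Module K P] [IsScalarTower K Λ P]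
    [FiniteDimensional K P]
    [AddCommGroup P'] [Module Λ P'] [Module K P'] [IsScalarTower K Λ P']
    [FiniteDimensional K P']
    [FiniteDimensional K (P →ₗ[Λ] P')]
    (hrigid : ExtOneVanish Λ M M)
    (p₀ : P →ₗ[Λ] P') (q : P' →ₗ[Λ] M)
    (hp₀ : Function.Injective p₀) (hq : Function.Surjective q)
    (hexact : LinearMap.range p₀ = LinearMap.ker q) :
    (∃ (m : ℕ) (g : Fin m → ((P →ₗ[Λ] P') → K)),
      (∀ j, IsPolynomialFun K (P →ₗ[Λ] P') (g j)) ∧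
      {f : P →ₗ[Λ] P' | Nonempty ((P' ⧸ LinearMap.range f) ≃ₗ[Λ] M)}
        = {f : P →ₗ[Λ] P' | ∃ j, g j f ≠ 0}) ∧
    {f : P →ₗ[Λ] P' | Nonempty ((P' ⧸ LinearMap.range f) ≃ₗ[Λ] M)}.Nonempty := by
  have hp₀q : Function.Exact p₀ q := LinearMap.exact_iff.2 hexact.symm
  have hdim := finrank_add_finrank_eq_of_exact (f := p₀.restrictScalars K)
    (g := q.restrictScalars K) hp₀ hq hp₀q
  refine ⟨?_, p₀, (nonempty_quotient_range_equiv_iff_exists_exact p₀).2 ⟨q, hq, hp₀q⟩⟩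
  rw [setOf_nonempty_quotient_range_equiv_eq K hrigid hdim]
  exact isZariskiOpen_setOf_exists_eval₂_ne_zero _

/-- Let `Λ` be a finite dimensional hereditary algebra over an infinite
field `K`, and let `M` be a rigid `Λ`-module (`Ext¹_Λ(M,M) = 0`) with projective
presentation `0 → P → P' → M → 0`.  Then the set of `f ∈ Hom_Λ(P, P')` with
`coker f ≅ M` is a nonempty Zariski open subset of the affine space `Hom_Λ(P, P')`
(a finite union of nonvanishing loci of polynomial functions). -/
theorem coker_iso_rigid_is_open_dense
    (K : Type) [Field K] [Infinite K]
    (Λ : Type) [Ring Λ] [Algebra K Λ] [FiniteDimensional K Λ]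
    -- Λ is hereditary: every (right) ideal is projective
    (hhered : ∀ I : Submodule Λ Λ, Module.Projective Λ I)
    (M P P' : Type)
    [AddCommGroup M] [Module Λ M] [Module K M] [IsScalarTower K Λ M]
    [SMulCommClass Λ K M] [FiniteDimensional K M]
    [AddCommGroup P] [Module Λ P] [Module K P] [IsScalarTower K Λ P]
    [SMulCommClass Λ K P] [FiniteDimensional K P]
    [AddCommGroup P'] [Module Λ P'] [Module K P'] [IsScalarTower K Λ P']
    [SMulCommClass Λ K P'] [FiniteDimensional K P']
    [FiniteDimensional K (P →ₗ[Λ] P')]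
    (hP : Module.Projective Λ P) (hP' : Module.Projective Λ P')
    (hrigid : ExtOneVanish Λ M M)
    (p₀ : P →ₗ[Λ] P') (q : P' →ₗ[Λ] M)
    (hp₀ : Function.Injective p₀) (hq : Function.Surjective q)
    (hexact : LinearMap.range p₀ = LinearMap.ker q) :
    (∃ (m : ℕ) (g : Fin m → ((P →ₗ[Λ] P') → K)),
      (∀ j, IsPolynomialFun K (P →ₗ[Λ] P') (g j)) ∧
      {f : P →ₗ[Λ] P' | Nonempty ((P' ⧸ LinearMap.range f) ≃ₗ[Λ] M)}
        = {f : P →ₗ[Λ] P' | ∃ j, g j f ≠ 0}) ∧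
    {f : P →ₗ[Λ] P' | Nonempty ((P' ⧸ LinearMap.range f) ≃ₗ[Λ] M)}.Nonempty :=
  coker_iso_rigid_is_open_dense_general K Λ M P P' hrigid p₀ q hp₀ hq hexact
end

section
/- Let L = F_2(t), F = F_2(t^2), K = F_2(t^4). Then the sequence of (L,L)-bimodules 0 → L ⊗_F L → L ⊗_K L → L ⊗_F L → 0, where the first map sends 1⊗1 to t^2⊗1 + 1⊗t^2 and the second sends 1⊗1 to 1⊗1, is exact and does not split; moreover L ⊗_K L is isomorphic as an L-algebra (via L⊗1) to L[X]/(X^4) under X ↦ t⊗1 + 1⊗t, and in particular L ⊗_K L is an indecomposable (L,L)-bimodule. -/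
open TensorProduct

set_option maxHeartbeats 1000000
set_option synthInstance.maxHeartbeats 400000

/-- `L = 𝔽₂(t)`. -/
noncomputable abbrev Ltwo := RatFunc (ZMod 2)

/-- `F = 𝔽₂(t²)` as a subfield of `L`. -/
noncomputable abbrev Fmid : Subfield Ltwo := Subfield.closure {RatFunc.X ^ 2}

/-- `K = 𝔽₂(t⁴)` as a subfield of `L`. -/
noncomputable abbrev Kbot : Subfield Ltwo := Subfield.closure {RatFunc.X ^ 4}

/-!
Since `t⁴ ∈ K` and the characteristic is 2, `τ = t ⊗ 1 + 1 ⊗ t` satisfies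
`τ⁴ = t⁴ ⊗ 1 + 1 ⊗ t⁴ = 0`; as `L = K(t)` and `[L : K] = 4`, `X ↦ τ` identifies `L[X]/(X⁴)`
with `L ⊗_K L`, and likewise `L[X]/(X²)` with `L ⊗_F L`. Under these identifications the natural
surjection `p : L ⊗_K L → L ⊗_F L` is the reduction `L[X]/(X⁴) → L[X]/(X²)`, whose kernel `(τ²)`
is also the annihilator of `τ²`. So multiplication by `τ²` descends to an injection
`j : L ⊗_F L → L ⊗_K L` with image `ker p`, and a bimodule section `s` of `p` is impossible:
`w = s 1` satisfies `τ² w = s (p τ² · 1) = 0`, so `w ∈ ker p`, contradicting `p w = 1`.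
Finally `L[X]/(X⁴)` is local, so it has no idempotents besides `0` and `1`.
-/

open Polynomial IntermediateField Module

theorem IsIdempotentElem.eq_zero_or_eq_one_of_ker_isNilpotent {R K : Type*} [CommRing R]
    [Field K] (f : R →+* K) (hf : ∀ x ∈ RingHom.ker f, IsNilpotent x) {e : R}
    (he : IsIdempotentElem e) : e = 0 ∨ e = 1 := by
  rcases IsIdempotentElem.iff_eq_zero_or_one.mp (he.map f) with h | h
  · exact .inl <| eq_of_isNilpotent_sub_of_isIdempotentElem he .zero (hf _ (by simp [h]))
  · exact .inr <| eq_of_isNilpotent_sub_of_isIdempotentElem he .one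
      (hf _ (by simp [RingHom.mem_ker, h]))

theorem Polynomial.eq_zero_or_eq_one_of_isIdempotentElem_quotient {K : Type*} [Field K] {n : ℕ}
    (hn : n ≠ 0) {e : K[X] ⧸ Ideal.span {(X : K[X]) ^ n}} (he : IsIdempotentElem e) :
    e = 0 ∨ e = 1 := by
  refine he.eq_zero_or_eq_one_of_ker_isNilpotent
    (Ideal.Quotient.lift _ (evalRingHom 0) fun f hf => ?_) fun x hx => ?_
  · obtain ⟨g, rfl⟩ := Ideal.mem_span_singleton.mp hf
    simp [hn]
  · obtain ⟨f, rfl⟩ := Ideal.Quotient.mk_surjective x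
    rw [RingHom.mem_ker, Ideal.Quotient.lift_mk, coe_evalRingHom, ← coeff_zero_eq_eval_zero,
      ← X_dvd_iff] at hx
    refine ⟨n, ?_⟩
    rw [← map_pow, Ideal.Quotient.eq_zero_iff_mem, Ideal.mem_span_singleton]
    exact pow_dvd_pow_of_dvd hx n

namespace Ideal.Quotient

variable {R : Type*} [CommRing R] {a : R} {m n : ℕ}

theorem mk_pow_mul_eq_zero_iff [IsDomain R] (ha : a ≠ 0) (y : R ⧸ span {a ^ (m + n)}) :
    mk _ (a ^ m) * y = 0 ↔ mk _ (a ^ n) ∣ y := by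
  obtain ⟨y, rfl⟩ := mk_surjective y
  rw [← map_mul, eq_zero_iff_mem, mem_span_singleton, pow_add,
    mul_dvd_mul_iff_left (pow_ne_zero m ha)]
  refine ⟨map_dvd _, fun ⟨z, hz⟩ => ?_⟩
  obtain ⟨z, rfl⟩ := mk_surjective z
  obtain ⟨w, hw⟩ := mem_span_singleton.mp (Ideal.Quotient.eq.mp (hz.trans (map_mul _ _ _).symm))
  exact ⟨z + a ^ m * w, by linear_combination hw⟩

theorem factor_pow_eq_zero_iff (h : span {a ^ (m + n)} ≤ span {a ^ m})
    (y : R ⧸ span {a ^ (m + n)}) : factor h y = 0 ↔ mk _ (a ^ m) ∣ y := by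
  obtain ⟨y, rfl⟩ := mk_surjective y
  rw [factor_mk, eq_zero_iff_mem, mem_span_singleton]
  refine ⟨map_dvd _, fun ⟨z, hz⟩ => ?_⟩
  obtain ⟨z, rfl⟩ := mk_surjective z
  obtain ⟨w, hw⟩ := mem_span_singleton.mp (Ideal.Quotient.eq.mp (hz.trans (map_mul _ _ _).symm))
  exact ⟨z + a ^ n * w, by linear_combination hw⟩

end Ideal.Quotient

namespace AlgHom

variable {k A B : Type*} [CommRing k] [CommRing A] [CommRing B] [Algebra k A] [Algebra k B]
  (p : A →ₐ[k] B) (hp : Function.Surjective p) (u : A)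

noncomputable def liftMulLeft (hu : ∀ y, p y = 0 → u * y = 0) : B →ₗ[k] A :=
  (LinearMap.ker p.toLinearMap).liftQ (LinearMap.mulLeft k u)
      (fun y hy => LinearMap.mem_ker.mpr (hu y (LinearMap.mem_ker.mp hy))) ∘ₗ
    (p.toLinearMap.quotKerEquivOfSurjective hp).symm.toLinearMap

variable {p hp u} (hu : ∀ y, p y = 0 → u * y = 0)

theorem liftMulLeft_apply (y : A) : p.liftMulLeft hp u hu (p y) = u * y := by
  have : (p.toLinearMap.quotKerEquivOfSurjective hp).symm (p y) = Submodule.Quotient.mk y :=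
    (LinearEquiv.symm_apply_eq _).mpr rfl
  rw [liftMulLeft, LinearMap.comp_apply, LinearEquiv.coe_coe, this, Submodule.liftQ_apply,
    LinearMap.mulLeft_apply]

theorem liftMulLeft_map_mul (y : A) (x : B) :
    p.liftMulLeft hp u hu (p y * x) = y * p.liftMulLeft hp u hu x := by
  obtain ⟨z, rfl⟩ := hp x
  rw [← map_mul, liftMulLeft_apply, liftMulLeft_apply, mul_left_comm]

theorem liftMulLeft_injective (hann : ∀ y, u * y = 0 → p y = 0) :
    Function.Injective (p.liftMulLeft hp u hu) := by
  refine (injective_iff_map_eq_zero _).mpr fun x hx => ?_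
  obtain ⟨y, rfl⟩ := hp x
  rw [liftMulLeft_apply] at hx
  exact hann y hx

theorem range_liftMulLeft (hker : ∀ y, p y = 0 ↔ u ∣ y) :
    LinearMap.range (p.liftMulLeft hp u hu) = LinearMap.ker p.toLinearMap := by
  ext x
  rw [LinearMap.mem_range, LinearMap.mem_ker, toLinearMap_apply, hker]
  constructor
  · rintro ⟨x, rfl⟩
    obtain ⟨y, rfl⟩ := hp x
    exact ⟨y, liftMulLeft_apply hu y⟩
  · rintro ⟨y, rfl⟩
    exact ⟨p y, liftMulLeft_apply hu y⟩

end AlgHom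

theorem AlgHom.not_exists_section {k A B : Type*} [CommRing k] [CommRing A] [CommRing B]
    [Algebra k A] [Algebra k B] [Nontrivial B] (p : A →ₐ[k] B) {u : A} (hpu : p u = 0)
    (hann : ∀ y, u * y = 0 → p y = 0) :
    ¬ ∃ s : B →ₗ[k] A, (∀ y x, s (p y * x) = y * s x) ∧ p.toLinearMap ∘ₗ s = LinearMap.id := by
  rintro ⟨s, hs, hps⟩
  have h1 : p (s 1) = 1 := LinearMap.congr_fun hps 1
  have h0 : p (s 1) = 0 := hann _ (by rw [← hs, hpu, zero_mul, map_zero])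
  exact one_ne_zero (h1.symm.trans h0)

section TensorSelf

variable {K L : Type*} [Field K] [Field L] [Algebra K L]

theorem Algebra.TensorProduct.eq_top_of_one_tmul_mem {t : L} (ht : Algebra.adjoin K {t} = ⊤)
    {A : Subalgebra L (L ⊗[K] L)} (htA : 1 ⊗ₜ[K] t ∈ A) : A = ⊤ := by
  have hright : Algebra.adjoin K {t} ≤ (A.restrictScalars K).comap includeRight :=
    Algebra.adjoin_le (by simpa using htA)
  refine Algebra.eq_top_iff.mpr fun x => ?_
  induction x with
  | zero => exact A.zero_mem
  | add x y hx hy => exact A.add_mem hx hy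
  | tmul a b =>
    have hb : 1 ⊗ₜ[K] b ∈ A := hright (ht ▸ Algebra.mem_top)
    simpa [TensorProduct.smul_tmul'] using A.smul_mem hb a

variable {t : L} {n : ℕ}

noncomputable def quotientXPowToTensorSelf (hnil : (t ⊗ₜ[K] 1 + 1 ⊗ₜ[K] t) ^ n = 0) :
    (L[X] ⧸ Ideal.span {(X : L[X]) ^ n}) →ₐ[L] L ⊗[K] L :=
  Ideal.Quotient.liftₐ _ (aeval (t ⊗ₜ[K] 1 + 1 ⊗ₜ[K] t)) fun f hf => by
    obtain ⟨g, rfl⟩ := Ideal.mem_span_singleton.mp hf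
    simp [hnil]

theorem quotientXPowToTensorSelf_mk_X (hnil : (t ⊗ₜ[K] 1 + 1 ⊗ₜ[K] t) ^ n = 0) :
    quotientXPowToTensorSelf hnil (Ideal.Quotient.mk _ X) = t ⊗ₜ[K] 1 + 1 ⊗ₜ[K] t :=
  (Ideal.Quotient.lift_mk _ _ _).trans (aeval_X _)

theorem quotientXPowToTensorSelf_bijective [FiniteDimensional K L] (ht : K⟮t⟯ = ⊤)
    (hn : finrank K L = n) (hnil : (t ⊗ₜ[K] 1 + 1 ⊗ₜ[K] t) ^ n = 0) :
    Function.Bijective (quotientXPowToTensorSelf hnil) := by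
  set ψ := quotientXPowToTensorSelf hnil
  have hsurj : Function.Surjective ψ := by
    have hX : ψ (Ideal.Quotient.mk _ X - algebraMap L _ t) = 1 ⊗ₜ[K] t := by
      rw [map_sub, AlgHom.commutes, quotientXPowToTensorSelf_mk_X,
        Algebra.TensorProduct.algebraMap_apply, Algebra.algebraMap_self, RingHom.id_apply,
        add_sub_cancel_left]
    rw [← AlgHom.range_eq_top]
    refine Algebra.TensorProduct.eq_top_of_one_tmul_mem ?_ ⟨_, hX⟩
    rw [← adjoin_simple_toSubalgebra_of_isAlgebraic (Algebra.IsAlgebraic.isAlgebraic t), ht,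
      top_toSubalgebra]
  have hdim : finrank L (L[X] ⧸ Ideal.span {(X : L[X]) ^ n}) = finrank L (L ⊗[K] L) := by
    rw [finrank_quotient_span_eq_natDegree, natDegree_X_pow, finrank_baseChange, hn]
  have := (monic_X_pow (R := L) n).finite_quotient
  exact ⟨(LinearMap.injective_iff_surjective_of_finrank_eq_finrank hdim (f := ψ.toLinearMap)).mpr
    hsurj, hsurj⟩

noncomputable def quotientXPowEquivTensorSelf [FiniteDimensional K L] (ht : K⟮t⟯ = ⊤)
    (hn : finrank K L = n) (hnil : (t ⊗ₜ[K] 1 + 1 ⊗ₜ[K] t) ^ n = 0) :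
    (L[X] ⧸ Ideal.span {(X : L[X]) ^ n}) ≃ₐ[L] L ⊗[K] L :=
  AlgEquiv.ofBijective _ (quotientXPowToTensorSelf_bijective ht hn hnil)

theorem quotientXPowEquivTensorSelf_mk_X [FiniteDimensional K L] (ht : K⟮t⟯ = ⊤)
    (hn : finrank K L = n) (hnil : (t ⊗ₜ[K] 1 + 1 ⊗ₜ[K] t) ^ n = 0) :
    quotientXPowEquivTensorSelf ht hn hnil (Ideal.Quotient.mk _ X) = t ⊗ₜ[K] 1 + 1 ⊗ₜ[K] t :=
  quotientXPowToTensorSelf_mk_X hnil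

theorem Algebra.TensorProduct.eq_zero_or_eq_one_of_isIdempotentElem [FiniteDimensional K L]
    (ht : K⟮t⟯ = ⊤) (hn : finrank K L = n) (hnil : (t ⊗ₜ[K] 1 + 1 ⊗ₜ[K] t) ^ n = 0)
    {e : L ⊗[K] L} (he : IsIdempotentElem e) : e = 0 ∨ e = 1 := by
  set φ := quotientXPowEquivTensorSelf ht hn hnil
  obtain ⟨z, rfl⟩ := φ.surjective e
  have hz : IsIdempotentElem z := φ.injective (by rw [map_mul, he.eq])
  rcases Polynomial.eq_zero_or_eq_one_of_isIdempotentElem_quotient (hn ▸ finrank_pos.ne') hz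
    with rfl | rfl
  · exact .inl (map_zero φ)
  · exact .inr (map_one φ)

end TensorSelf

section CharTwo

variable {K L : Type*} [Field K] [Field L] [Algebra K L] [CharP L 2]

theorem tmul_one_add_one_tmul_pow_two_pow (a b : L) (k : ℕ) :
    (a ⊗ₜ[K] 1 + 1 ⊗ₜ[K] b) ^ 2 ^ k = (a ^ 2 ^ k) ⊗ₜ[K] 1 + 1 ⊗ₜ[K] (b ^ 2 ^ k) := by
  have := charP_of_injective_algebraMap' L (A := L ⊗[K] L) 2
  rw [add_pow_char_pow, Algebra.TensorProduct.tmul_pow, Algebra.TensorProduct.tmul_pow, one_pow]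

theorem tmul_one_add_one_tmul_pow_two_pow_eq_zero {t : L} {k : ℕ}
    (ht : t ^ 2 ^ k ∈ (algebraMap K L).range) : (t ⊗ₜ[K] 1 + 1 ⊗ₜ[K] t) ^ 2 ^ k = 0 := by
  obtain ⟨c, hc⟩ := ht
  have := charP_of_injective_algebraMap' L (A := L ⊗[K] L) 2
  rw [tmul_one_add_one_tmul_pow_two_pow, ← hc, Algebra.algebraMap_eq_smul_one,
    TensorProduct.smul_tmul, CharTwo.add_self_eq_zero]

end CharTwo

theorem ZMod.toSubfield_adjoin {p : ℕ} [Fact p.Prime] {E : Type*} [Field E] [Algebra (ZMod p) E]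
    (S : Set E) : (adjoin (ZMod p) S).toSubfield = Subfield.closure S := by
  rw [adjoin_toSubfield]
  refine le_antisymm (Subfield.closure_le.mpr (Set.union_subset ?_ Subfield.subset_closure))
    (Subfield.closure_mono Set.subset_union_right)
  rintro _ ⟨x, rfl⟩
  rw [← ZMod.natCast_zmod_val x, map_natCast]
  exact natCast_mem _ _

theorem Subfield.finrank_eq_of_eq_toSubfield {k E : Type*} [Field k] [Field E] [Algebra k E]
    {S : Subfield E} {M : IntermediateField k E} (h : S = M.toSubfield) :
    finrank S E = finrank M E := by
  subst h; rfl

namespace RatFunc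

variable {p : ℕ} [Fact p.Prime]

theorem finrank_closure_X_pow (n : ℕ) :
    finrank (Subfield.closure {(X : RatFunc (ZMod p)) ^ n}) (RatFunc (ZMod p)) = n := by
  rw [Subfield.finrank_eq_of_eq_toSubfield (ZMod.toSubfield_adjoin (p := p) _).symm,
    finrank_eq_max_natDegree, ← algebraMap_X, ← map_pow, num_algebraMap, denom_algebraMap]
  simp

theorem adjoin_X_eq_top (S : Subfield (RatFunc (ZMod p))) : S⟮(X : RatFunc (ZMod p))⟯ = ⊤ := by
  have h : Subfield.closure {X} ≤ (S⟮(X : RatFunc (ZMod p))⟯).toSubfield :=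
    Subfield.closure_le.mpr (Set.singleton_subset_iff.mpr (mem_adjoin_simple_self S X))
  rw [← ZMod.toSubfield_adjoin (p := p), RatFunc.adjoin_X, top_toSubfield] at h
  exact toSubfield_injective (top_le_iff.mp h)

end RatFunc

local notation "τK" => (RatFunc.X : Ltwo) ⊗ₜ[Kbot] (1 : Ltwo) + (1 : Ltwo) ⊗ₜ[Kbot] RatFunc.X
local notation "τF" => (RatFunc.X : Ltwo) ⊗ₜ[Fmid] (1 : Ltwo) + (1 : Ltwo) ⊗ₜ[Fmid] RatFunc.X

theorem Kbot_le_Fmid : Kbot ≤ Fmid := by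
  have h := pow_mem (Subfield.subset_closure rfl : (RatFunc.X : Ltwo) ^ 2 ∈ Fmid) 2
  rw [← pow_mul] at h
  exact Subfield.closure_le.mpr (Set.singleton_subset_iff.mpr h)

instance : TensorProduct.CompatibleSMul Fmid Kbot Ltwo Ltwo :=
  ⟨fun k a b => TensorProduct.smul_tmul (⟨k, Kbot_le_Fmid k.2⟩ : Fmid) a b⟩

instance : FiniteDimensional Kbot Ltwo :=
  Module.finite_of_finrank_pos (by rw [RatFunc.finrank_closure_X_pow]; norm_num)

instance : FiniteDimensional Fmid Ltwo :=
  Module.finite_of_finrank_pos (by rw [RatFunc.finrank_closure_X_pow]; norm_num)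

noncomputable def tensorKToF : Ltwo ⊗[Kbot] Ltwo →ₐ[Ltwo] Ltwo ⊗[Fmid] Ltwo :=
  Algebra.TensorProduct.mapOfCompatibleSMul Fmid Kbot Ltwo Ltwo Ltwo

theorem tensorKToF_surjective : Function.Surjective tensorKToF :=
  Algebra.TensorProduct.mapOfCompatibleSMul_surjective _ _ _ _ _

theorem tauK_pow_four : τK ^ 4 = 0 :=
  tmul_one_add_one_tmul_pow_two_pow_eq_zero (k := 2) ⟨⟨_, Subfield.subset_closure rfl⟩, rfl⟩

theorem tauF_sq : τF ^ 2 = 0 :=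
  tmul_one_add_one_tmul_pow_two_pow_eq_zero (k := 1) ⟨⟨_, Subfield.subset_closure rfl⟩, rfl⟩

noncomputable def equivK : (Ltwo[X] ⧸ Ideal.span {(X : Ltwo[X]) ^ 4}) ≃ₐ[Ltwo] Ltwo ⊗[Kbot] Ltwo :=
  quotientXPowEquivTensorSelf (RatFunc.adjoin_X_eq_top _) (RatFunc.finrank_closure_X_pow 4)
    tauK_pow_four

noncomputable def equivF : (Ltwo[X] ⧸ Ideal.span {(X : Ltwo[X]) ^ 2}) ≃ₐ[Ltwo] Ltwo ⊗[Fmid] Ltwo :=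
  quotientXPowEquivTensorSelf (RatFunc.adjoin_X_eq_top _) (RatFunc.finrank_closure_X_pow 2)
    tauF_sq

theorem equivK_mk_X : equivK (Ideal.Quotient.mk _ X) = τK :=
  quotientXPowEquivTensorSelf_mk_X _ _ _

theorem equivF_mk_X : equivF (Ideal.Quotient.mk _ X) = τF :=
  quotientXPowEquivTensorSelf_mk_X _ _ _

theorem span_X_pow_four_le : Ideal.span {(X : Ltwo[X]) ^ 4} ≤ Ideal.span {X ^ 2} :=
  Ideal.span_singleton_le_span_singleton.mpr (pow_dvd_pow X (by norm_num))

theorem tensorKToF_equivK (z : Ltwo[X] ⧸ Ideal.span {(X : Ltwo[X]) ^ 4}) :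
    tensorKToF (equivK z) = equivF (Ideal.Quotient.factor span_X_pow_four_le z) := by
  have : tensorKToF.comp equivK.toAlgHom =
      equivF.toAlgHom.comp (Ideal.Quotient.factorₐ Ltwo span_X_pow_four_le) := by
    refine Ideal.Quotient.algHom_ext _ (Polynomial.algHom_ext ?_)
    change tensorKToF (equivK (Ideal.Quotient.mk _ X)) = equivF (Ideal.Quotient.mk _ X)
    rw [equivK_mk_X, equivF_mk_X, map_add]
    rfl
  exact AlgHom.congr_fun this z

theorem tauK_sq_mul_eq_zero_iff (y : Ltwo ⊗[Kbot] Ltwo) : τK ^ 2 * y = 0 ↔ tensorKToF y = 0 := by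
  obtain ⟨z, rfl⟩ := equivK.surjective y
  rw [← equivK_mk_X, ← map_pow, ← map_mul, map_eq_zero_iff _ equivK.injective, tensorKToF_equivK,
    map_eq_zero_iff _ equivF.injective, ← map_pow]
  exact (Ideal.Quotient.mk_pow_mul_eq_zero_iff (m := 2) (n := 2) X_ne_zero z).trans
    (Ideal.Quotient.factor_pow_eq_zero_iff (m := 2) (n := 2) _ z).symm

theorem tensorKToF_eq_zero_iff (y : Ltwo ⊗[Kbot] Ltwo) : tensorKToF y = 0 ↔ τK ^ 2 ∣ y := by
  obtain ⟨z, rfl⟩ := equivK.surjective y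
  rw [tensorKToF_equivK, map_eq_zero_iff _ equivF.injective, ← equivK_mk_X, ← map_pow,
    map_dvd_iff, ← map_pow]
  exact Ideal.Quotient.factor_pow_eq_zero_iff (m := 2) (n := 2) _ z

theorem tensorKToF_mul_of_forall_tmul (s : Ltwo ⊗[Fmid] Ltwo →ₗ[Ltwo] Ltwo ⊗[Kbot] Ltwo)
    (hs : ∀ (a b : Ltwo) (x : Ltwo ⊗[Fmid] Ltwo), s ((a ⊗ₜ[Fmid] b) * x) = (a ⊗ₜ[Kbot] b) * s x)
    (y : Ltwo ⊗[Kbot] Ltwo) (x : Ltwo ⊗[Fmid] Ltwo) : s (tensorKToF y * x) = y * s x := by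
  induction y with
  | zero => simp
  | tmul a b => exact hs a b x
  | add y z hy hz => rw [map_add, add_mul, map_add, hy, hz, add_mul]

theorem tauK_sq : τK ^ 2 = (RatFunc.X ^ 2) ⊗ₜ[Kbot] 1 + 1 ⊗ₜ[Kbot] (RatFunc.X ^ 2) :=
  tmul_one_add_one_tmul_pow_two_pow _ _ 1

/-- With `L = 𝔽₂(t)`, `F = 𝔽₂(t²)`, `K = 𝔽₂(t⁴)`:
(1) `L ⊗_K L` is isomorphic as an `L`-algebra to `L[X]/(X⁴)` with `X ↦ t⊗1 + 1⊗t`;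
(2) the sequence of `(L,L)`-bimodules `0 → L ⊗_F L → L ⊗_K L → L ⊗_F L → 0`, with first
map sending `1⊗1` to `t²⊗1 + 1⊗t²` and second map sending `1⊗1` to `1⊗1` (both maps of
`(L,L)`-bimodules, i.e. `L`-linear and commuting with multiplication by the elements
`a ⊗ b`), is exact and does not split;
(3) `L ⊗_K L` is an indecomposable `(L,L)`-bimodule (equivalently, since its bimodule
decompositions correspond to its idempotents, it has no nontrivial idempotents). -/
theorem function_field_tensor_nonsplit :
    -- (1) the `L`-algebra isomorphism `L[X]/(X⁴) ≅ L ⊗[K] L`, `X ↦ t⊗1 + 1⊗t`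
    (∃ e : (Polynomial Ltwo ⧸ Ideal.span {(Polynomial.X : Polynomial Ltwo) ^ 4})
        ≃ₐ[Ltwo] (TensorProduct Kbot Ltwo Ltwo),
      e (Ideal.Quotient.mk _ Polynomial.X)
        = RatFunc.X ⊗ₜ[Kbot] 1 + 1 ⊗ₜ[Kbot] RatFunc.X) ∧
    -- (2) the exact, non-split sequence of `(L,L)`-bimodules
    (∃ (j : TensorProduct Fmid Ltwo Ltwo →ₗ[Ltwo] TensorProduct Kbot Ltwo Ltwo)
        (p : TensorProduct Kbot Ltwo Ltwo →ₗ[Ltwo] TensorProduct Fmid Ltwo Ltwo),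
      j (1 ⊗ₜ[Fmid] 1) = (RatFunc.X ^ 2) ⊗ₜ[Kbot] 1 + 1 ⊗ₜ[Kbot] (RatFunc.X ^ 2) ∧
      p (1 ⊗ₜ[Kbot] 1) = 1 ⊗ₜ[Fmid] 1 ∧
      (∀ (a b : Ltwo) (x : TensorProduct Fmid Ltwo Ltwo),
        j ((a ⊗ₜ[Fmid] b) * x) = (a ⊗ₜ[Kbot] b) * j x) ∧
      (∀ (a b : Ltwo) (x : TensorProduct Kbot Ltwo Ltwo),
        p ((a ⊗ₜ[Kbot] b) * x) = (a ⊗ₜ[Fmid] b) * p x) ∧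
      Function.Injective j ∧ Function.Surjective p ∧
      LinearMap.range j = LinearMap.ker p ∧
      ¬ ∃ s : TensorProduct Fmid Ltwo Ltwo →ₗ[Ltwo] TensorProduct Kbot Ltwo Ltwo,
        (∀ (a b : Ltwo) (x : TensorProduct Fmid Ltwo Ltwo),
          s ((a ⊗ₜ[Fmid] b) * x) = (a ⊗ₜ[Kbot] b) * s x) ∧
        p.comp s = LinearMap.id) ∧
    -- (3) `L ⊗[K] L` is indecomposable: it has no nontrivial idempotents
    (∀ e : TensorProduct Kbot Ltwo Ltwo, e * e = e → e = 0 ∨ e = 1) := by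
  have hu y : tensorKToF y = 0 → τK ^ 2 * y = 0 := (tauK_sq_mul_eq_zero_iff y).mpr
  have hann y : τK ^ 2 * y = 0 → tensorKToF y = 0 := (tauK_sq_mul_eq_zero_iff y).mp
  refine ⟨⟨equivK, equivK_mk_X⟩, ⟨tensorKToF.liftMulLeft tensorKToF_surjective _ hu,
    tensorKToF.toLinearMap, ?_, rfl, fun a b => AlgHom.liftMulLeft_map_mul hu (a ⊗ₜ b),
    fun a b => map_mul tensorKToF _, AlgHom.liftMulLeft_injective hu hann, tensorKToF_surjective,
    AlgHom.range_liftMulLeft hu tensorKToF_eq_zero_iff, ?_⟩,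
    fun e => Algebra.TensorProduct.eq_zero_or_eq_one_of_isIdempotentElem
      (RatFunc.adjoin_X_eq_top _) (RatFunc.finrank_closure_X_pow 4) tauK_pow_four⟩
  · exact (AlgHom.liftMulLeft_apply hu 1).trans ((mul_one _).trans tauK_sq)
  · rintro ⟨s, hs, hps⟩
    exact tensorKToF.not_exists_section ((tensorKToF_eq_zero_iff _).mpr dvd_rfl) hann
      ⟨s, tensorKToF_mul_of_forall_tmul s hs, hps⟩
end
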